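/- arXiv:2203.02190 — 8 statements merged into one kernel-verified Lean document; each statement's English description precedes it below -/
import Mathlib

section
/- Let β > 1 and let e₁, e₂, f₁, f₂ ∈ ℝ² be pairwise distinct points such that both {e₁,e₂} and {f₁,f₂} are edges of the β-skeleton of the four-point set {e₁,e₂,f₁,f₂}. Then for every point M ∈ ℝ² with dist(M,e₁) = dist(M,e₂) = β·dist(e₁,e₂)/2, the closed segment [f₁,f₂] is disjoint from the closed triangle conv{M, e₁, e₂}. -/
open Metric Set

/-- The union of the two closed disks of radius `β * dist x y / 2` whose boundary
circles pass through both `x` and `y`. -/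
def Cbeta (β : ℝ) (x y : EuclideanSpace ℝ (Fin 2)) : Set (EuclideanSpace ℝ (Fin 2)) :=
  {z | ∃ M : EuclideanSpace ℝ (Fin 2),
    dist M x = β * dist x y / 2 ∧ dist M y = β * dist x y / 2 ∧ dist z M ≤ β * dist x y / 2}

/-- `{x, y}` is an edge of the β-skeleton of `φ`. -/
def IsSkelEdge (β : ℝ) (φ : Set (EuclideanSpace ℝ (Fin 2)))
    (x y : EuclideanSpace ℝ (Fin 2)) : Prop :=
  x ∈ φ ∧ y ∈ φ ∧ x ≠ y ∧ Cbeta β x y ∩ φ ⊆ {x, y}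



private lemma absle (z s : ℝ) (hs : 0 ≤ s) (h : z^2 ≤ s^2) : -s ≤ z ∧ z ≤ s := by
  constructor <;> nlinarith

private lemma ltbound (c s z : ℝ) (h1 : z ≤ c + s) (h2 : -(c+s) ≤ z)
    (h3 : s^2 < (c-z)^2) (h4 : s^2 < (c+z)^2) (hs : 0 ≤ s) : z < c - s ∧ -z < c - s := by
  constructor <;> nlinarith

private lemma finalstep (c s t x y xm : ℝ) (hs0 : 0 ≤ s) (ht0 : 0 ≤ t) (hts : t ≤ s)
    (ht2 : t^2 = s^2 - y^2)
    (hxm1 : xm < c - s) (hxm2 : -xm < c - s)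
    (hx1 : x - xm ≤ t) (hx2 : xm - x ≤ t) :
    x^2 + y^2 ≤ c^2 := by
  have hA1 : x < c - s + t := by linarith
  have hA2 : -x < c - s + t := by linarith
  nlinarith [mul_pos (by linarith : (0:ℝ) < c - s + t - x) (by linarith : (0:ℝ) < c - s + t + x),
    mul_nonneg (by linarith : (0:ℝ) ≤ c - s) (by linarith : (0:ℝ) ≤ s - t)]

-- scalar core lemma
lemma scalarB (c R2 x y xm ym xp : ℝ) (hc : 0 < c)
    (h1 : (x - xm)^2 + (y - ym)^2 = R2)
    (h2 : R2 < (c + xm)^2 + ym^2)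
    (h3 : R2 < (c - xm)^2 + ym^2)
    (h4 : (xp - xm)^2 + ym^2 ≤ R2)
    (h5 : -c ≤ xp) (h6 : xp ≤ c)
    (h7 : y * ym ≤ 0) :
    x^2 + y^2 ≤ c^2 := by
  have hD2 : 0 ≤ R2 - ym^2 := by nlinarith [sq_nonneg (xp - xm)]
  set s := Real.sqrt (R2 - ym^2) with hs
  have hs0 : 0 ≤ s := Real.sqrt_nonneg _
  have hs2 : s^2 = R2 - ym^2 := Real.sq_sqrt hD2
  have hxw : (x - xm)^2 ≤ s^2 - y^2 := by nlinarith
  have hy2 : 0 ≤ s^2 - y^2 := by nlinarith [sq_nonneg (x - xm)]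
  set t := Real.sqrt (s^2 - y^2) with hts
  have ht0 : 0 ≤ t := Real.sqrt_nonneg _
  have ht2 : t^2 = s^2 - y^2 := Real.sq_sqrt hy2
  have hts' : t ≤ s := by nlinarith
  obtain ⟨h8, h9⟩ := absle (xp - xm) s hs0 (by nlinarith)
  obtain ⟨hxm1, hxm2⟩ := ltbound c s xm (by linarith) (by linarith)
    (by nlinarith) (by nlinarith) hs0
  obtain ⟨hx2, hx1⟩ := absle (x - xm) t ht0 (by nlinarith)
  exact finalstep c s t x y xm hs0 ht0 hts' ht2 hxm1 hxm2 hx1 (by linarith)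

set_option maxHeartbeats 1000000 in
lemma coordB (r f10 f11 f20 f21 e0 e1 M0 M1 a b : ℝ)
    (hU : 0 < (f10 - f20)^2 + (f11 - f21)^2)
    (he : (e0 - M0)^2 + (e1 - M1)^2 = r^2)
    (hf1 : r^2 < (f10 - M0)^2 + (f11 - M1)^2)
    (hf2 : r^2 < (f20 - M0)^2 + (f21 - M1)^2)
    (hp : (a*f10 + b*f20 - M0)^2 + (a*f11 + b*f21 - M1)^2 ≤ r^2)
    (ha : 0 ≤ a) (hb : 0 ≤ b) (hab : a + b = 1)
    (hsign : ((e1 - (f11+f21)/2)*(f20-f10) - (e0 - (f10+f20)/2)*(f21-f11)) *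
             ((M1 - (f11+f21)/2)*(f20-f10) - (M0 - (f10+f20)/2)*(f21-f11)) ≤ 0) :
    (f10 - e0)*(f20 - e0) + (f11 - e1)*(f21 - e1) ≤ 0 := by
  obtain rfl : b = 1 - a := by linarith
  set U := (f10 - f20)^2 + (f11 - f21)^2 with hUdef
  set Xe := (e0 - (f10 + f20)/2)*(f20 - f10) + (e1 - (f11 + f21)/2)*(f21 - f11) with hXe
  set Ye := (e1 - (f11 + f21)/2)*(f20 - f10) - (e0 - (f10 + f20)/2)*(f21 - f11) with hYe
  set XM := (M0 - (f10 + f20)/2)*(f20 - f10) + (M1 - (f11 + f21)/2)*(f21 - f11) with hXM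
  set YM := (M1 - (f11 + f21)/2)*(f20 - f10) - (M0 - (f10 + f20)/2)*(f21 - f11) with hYM
  set Xp := (1 - 2*a)*U/2 with hXp
  clear_value U Xe Ye XM YM Xp
  have key := scalarB (U/2) (r^2*U) Xe Ye XM YM Xp (by linarith)
    (by have hid : (Xe - XM)^2 + (Ye - YM)^2 = U * ((e0 - M0)^2 + (e1 - M1)^2) := by
          simp only [hXe, hYe, hXM, hYM, hUdef]; ring
        rw [hid, he]; ring)
    (by have hid : (U/2 + XM)^2 + YM^2 = U * ((f10 - M0)^2 + (f11 - M1)^2) := by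
          simp only [hXM, hYM, hUdef]; ring
        rw [hid]
        have h2 := mul_lt_mul_of_pos_left hf1 hU
        linarith [h2])
    (by have hid : (U/2 - XM)^2 + YM^2 = U * ((f20 - M0)^2 + (f21 - M1)^2) := by
          simp only [hXM, hYM, hUdef]; ring
        rw [hid]
        have h3 := mul_lt_mul_of_pos_left hf2 hU
        linarith [h3])
    (by have hid : (Xp - XM)^2 + YM^2
          = U * ((a*f10 + (1-a)*f20 - M0)^2 + (a*f11 + (1-a)*f21 - M1)^2) := by
          simp only [hXp, hXM, hYM, hUdef]; ring
        rw [hid]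
        have h4 := mul_le_mul_of_nonneg_left hp (le_of_lt hU)
        linarith [h4])
    (by have h5 : 0 ≤ (1 - a) * U := mul_nonneg (by linarith) (le_of_lt hU)
        simp only [hXp]; nlinarith [h5])
    (by have h6 : 0 ≤ a * U := mul_nonneg ha (le_of_lt hU)
        simp only [hXp]; nlinarith [h6])
    hsign
  have hUG : U * ((f10 - e0)*(f20 - e0) + (f11 - e1)*(f21 - e1)) ≤ 0 := by
    have hid : U * ((f10 - e0)*(f20 - e0) + (f11 - e1)*(f21 - e1))
        = Xe^2 + Ye^2 - (U/2)^2 := by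
      simp only [hXe, hYe, hUdef]; ring
    rw [hid]; linarith
  by_contra hcon
  push_neg at hcon
  nlinarith [mul_pos hU hcon]

lemma existsCenter (β a0 a1 b0 b1 z0 z1 : ℝ) (hβ : 1 ≤ β)
    (h : (a0 - z0)*(b0 - z0) + (a1 - z1)*(b1 - z1) ≤ 0) :
    ∃ c0 c1 : ℝ,
      (c0 - a0)^2 + (c1 - a1)^2 = β^2*((a0-b0)^2+(a1-b1)^2)/4 ∧
      (c0 - b0)^2 + (c1 - b1)^2 = β^2*((a0-b0)^2+(a1-b1)^2)/4 ∧
      (z0 - c0)^2 + (z1 - c1)^2 ≤ β^2*((a0-b0)^2+(a1-b1)^2)/4 := by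
  have hq2 : (Real.sqrt (β^2 - 1)/2)^2 = (β^2-1)/4 := by
    rw [div_pow, Real.sq_sqrt (by nlinarith)]; norm_num
  have hq0 : 0 ≤ Real.sqrt (β^2 - 1)/2 := by positivity
  obtain ⟨k, hk2, hkY⟩ : ∃ k : ℝ, k^2 = (β^2-1)/4 ∧
      0 ≤ k * ((z1 - (a1+b1)/2)*(b0-a0) - (z0 - (a0+b0)/2)*(b1-a1)) := by
    rcases le_or_gt 0 ((z1 - (a1+b1)/2)*(b0-a0) - (z0 - (a0+b0)/2)*(b1-a1)) with h'|h'
    · exact ⟨_, hq2, mul_nonneg hq0 h'⟩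
    · refine ⟨-(Real.sqrt (β^2 - 1)/2), by rw [neg_pow]; simp [hq2], ?_⟩
      nlinarith [mul_nonneg hq0 (le_of_lt (neg_pos.mpr h'))]
  have hk2V : k^2 * ((a0-b0)^2+(a1-b1)^2) = (β^2-1)/4 * ((a0-b0)^2+(a1-b1)^2) := by
    rw [hk2]
  refine ⟨(a0+b0)/2 - k*(b1-a1), (a1+b1)/2 + k*(b0-a0), ?_, ?_, ?_⟩
  · linear_combination ((a0-b0)^2+(a1-b1)^2) * hk2
  · linear_combination ((a0-b0)^2+(a1-b1)^2) * hk2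
  · nlinarith [h, hkY, hk2V]

lemma dist_sq_eq (x y : EuclideanSpace ℝ (Fin 2)) :
    dist x y ^ 2 = (x 0 - y 0)^2 + (x 1 - y 1)^2 := by
  rw [EuclideanSpace.dist_eq, Real.sq_sqrt (by positivity)]
  simp [Fin.sum_univ_two, Real.dist_eq, sq_abs]

lemma mem_Cbeta (β : ℝ) (hβ : 1 ≤ β) (z f₁ f₂ : EuclideanSpace ℝ (Fin 2))
    (h : (f₁ 0 - z 0)*(f₂ 0 - z 0) + (f₁ 1 - z 1)*(f₂ 1 - z 1) ≤ 0) :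
    z ∈ Cbeta β f₁ f₂ := by
  obtain ⟨c0, c1, h1, h2, h3⟩ := existsCenter β (f₁ 0) (f₁ 1) (f₂ 0) (f₂ 1) (z 0) (z 1) hβ h
  have hr0 : 0 ≤ β * dist f₁ f₂ / 2 :=
    div_nonneg (mul_nonneg (by linarith) dist_nonneg) (by norm_num)
  have hd2 : dist f₁ f₂ ^ 2 = (f₁ 0 - f₂ 0)^2 + (f₁ 1 - f₂ 1)^2 := dist_sq_eq _ _
  refine ⟨(WithLp.equiv 2 (Fin 2 → ℝ)).symm ![c0, c1], ?_, ?_, ?_⟩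
  · have hsq : dist ((WithLp.equiv 2 (Fin 2 → ℝ)).symm ![c0, c1] : EuclideanSpace ℝ (Fin 2)) f₁ ^ 2
        = (β * dist f₁ f₂ / 2)^2 := by
      rw [dist_sq_eq]
      show (c0 - f₁ 0)^2 + (c1 - f₁ 1)^2 = _
      rw [h1, ← hd2]; ring
    have := congrArg Real.sqrt hsq
    rwa [Real.sqrt_sq dist_nonneg, Real.sqrt_sq hr0] at this
  · have hsq : dist ((WithLp.equiv 2 (Fin 2 → ℝ)).symm ![c0, c1] : EuclideanSpace ℝ (Fin 2)) f₂ ^ 2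
        = (β * dist f₁ f₂ / 2)^2 := by
      rw [dist_sq_eq]
      show (c0 - f₂ 0)^2 + (c1 - f₂ 1)^2 = _
      rw [h2, ← hd2]; ring
    have := congrArg Real.sqrt hsq
    rwa [Real.sqrt_sq dist_nonneg, Real.sqrt_sq hr0] at this
  · have hsq : dist z ((WithLp.equiv 2 (Fin 2 → ℝ)).symm ![c0, c1] : EuclideanSpace ℝ (Fin 2)) ^ 2
        ≤ (β * dist f₁ f₂ / 2)^2 := by
      rw [dist_sq_eq]
      show (z 0 - c0)^2 + (z 1 - c1)^2 ≤ _
      calc (z 0 - c0)^2 + (z 1 - c1)^2 ≤ β^2*((f₁ 0 - f₂ 0)^2+(f₁ 1 - f₂ 1)^2)/4 := h3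
        _ = (β * dist f₁ f₂ / 2)^2 := by rw [← hd2]; ring
    have := Real.sqrt_le_sqrt hsq
    rwa [Real.sqrt_sq dist_nonneg, Real.sqrt_sq hr0] at this

set_option maxHeartbeats 1000000 in
theorem stmt0 (β : ℝ) (hβ : 1 < β) (e₁ e₂ f₁ f₂ : EuclideanSpace ℝ (Fin 2))
    (h12 : e₁ ≠ e₂) (h13 : e₁ ≠ f₁) (h14 : e₁ ≠ f₂)
    (h23 : e₂ ≠ f₁) (h24 : e₂ ≠ f₂) (h34 : f₁ ≠ f₂)
    (he : IsSkelEdge β {e₁, e₂, f₁, f₂} e₁ e₂)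
    (hf : IsSkelEdge β {e₁, e₂, f₁, f₂} f₁ f₂)
    (M : EuclideanSpace ℝ (Fin 2))
    (hM1 : dist M e₁ = β * dist e₁ e₂ / 2) (hM2 : dist M e₂ = β * dist e₁ e₂ / 2) :
    Disjoint (segment ℝ f₁ f₂) (convexHull ℝ {M, e₁, e₂}) := by
  by_contra hnd
  obtain ⟨p, hp1, hp2⟩ := Set.not_disjoint_iff.mp hnd
  set r := β * dist e₁ e₂ / 2 with hr
  have hr0 : 0 ≤ r := div_nonneg (mul_nonneg (by linarith) dist_nonneg) (by norm_num)
  -- f₁, f₂ are outside the closed ball of center M radius r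
  have hout : ∀ g : EuclideanSpace ℝ (Fin 2), g ∈ ({e₁, e₂, f₁, f₂} : Set _) →
      g ≠ e₁ → g ≠ e₂ → r < dist g M := by
    intro g hgφ hg1 hg2
    by_contra hle
    push_neg at hle
    have : g ∈ Cbeta β e₁ e₂ := ⟨M, hM1, hM2, hle⟩
    have := he.2.2.2 ⟨this, hgφ⟩
    simp only [Set.mem_insert_iff, Set.mem_singleton_iff] at this
    tauto
  have hf1M : r < dist f₁ M := hout f₁ (by simp) (Ne.symm h13) (Ne.symm h23)
  have hf2M : r < dist f₂ M := hout f₂ (by simp) (Ne.symm h14) (Ne.symm h24)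
  -- the triangle is inside the ball
  have hsubB : convexHull ℝ ({M, e₁, e₂} : Set (EuclideanSpace ℝ (Fin 2))) ⊆ closedBall M r := by
    refine convexHull_min ?_ (convex_closedBall M r)
    intro z hz
    simp only [Set.mem_insert_iff, Set.mem_singleton_iff] at hz
    rcases hz with rfl | rfl | rfl
    · simp [hr0]
    · rw [mem_closedBall, dist_comm, hM1]
    · rw [mem_closedBall, dist_comm, hM2]
  have hpM : dist p M ≤ r := mem_closedBall.mp (hsubB hp2)
  -- segment coefficients
  obtain ⟨a, b, ha, hb, hab, hpeq⟩ := hp1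
  have hp0 : p 0 = a * f₁ 0 + b * f₂ 0 := by rw [← hpeq]; rfl
  have hp1' : p 1 = a * f₁ 1 + b * f₂ 1 := by rw [← hpeq]; rfl
  -- squared facts
  have hUpos : 0 < (f₁ 0 - f₂ 0)^2 + (f₁ 1 - f₂ 1)^2 := by
    rw [← dist_sq_eq]
    exact pow_pos (dist_pos.mpr h34) 2
  have he1sq : (e₁ 0 - M 0)^2 + (e₁ 1 - M 1)^2 = r^2 := by
    rw [← dist_sq_eq, dist_comm, hM1]
  have he2sq : (e₂ 0 - M 0)^2 + (e₂ 1 - M 1)^2 = r^2 := by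
    rw [← dist_sq_eq, dist_comm, hM2]
  have hf1sq : r^2 < (f₁ 0 - M 0)^2 + (f₁ 1 - M 1)^2 := by
    rw [← dist_sq_eq]
    exact pow_lt_pow_left₀ hf1M hr0 (by norm_num)
  have hf2sq : r^2 < (f₂ 0 - M 0)^2 + (f₂ 1 - M 1)^2 := by
    rw [← dist_sq_eq]
    exact pow_lt_pow_left₀ hf2M hr0 (by norm_num)
  have hpsq : (a * f₁ 0 + b * f₂ 0 - M 0)^2 + (a * f₁ 1 + b * f₂ 1 - M 1)^2 ≤ r^2 := by
    rw [← hp0, ← hp1', ← dist_sq_eq]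
    exact pow_le_pow_left₀ dist_nonneg hpM 2
  -- sign step : one of e₁, e₂ is weakly on the other side of line f₁f₂ from M
  have step1 :
      ((e₁ 1 - (f₁ 1 + f₂ 1)/2)*(f₂ 0 - f₁ 0) - (e₁ 0 - (f₁ 0 + f₂ 0)/2)*(f₂ 1 - f₁ 1)) *
      ((M 1 - (f₁ 1 + f₂ 1)/2)*(f₂ 0 - f₁ 0) - (M 0 - (f₁ 0 + f₂ 0)/2)*(f₂ 1 - f₁ 1)) ≤ 0 ∨
      ((e₂ 1 - (f₁ 1 + f₂ 1)/2)*(f₂ 0 - f₁ 0) - (e₂ 0 - (f₁ 0 + f₂ 0)/2)*(f₂ 1 - f₁ 1)) *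
      ((M 1 - (f₁ 1 + f₂ 1)/2)*(f₂ 0 - f₁ 0) - (M 0 - (f₁ 0 + f₂ 0)/2)*(f₂ 1 - f₁ 1)) ≤ 0 := by
    by_contra hc
    push_neg at hc
    obtain ⟨hc1, hc2⟩ := hc
    have hlin : IsLinearMap ℝ
        (fun z : EuclideanSpace ℝ (Fin 2) => z 1 * (f₂ 0 - f₁ 0) - z 0 * (f₂ 1 - f₁ 1)) := by
      constructor
      · intro x y
        show (x 1 + y 1) * (f₂ 0 - f₁ 0) - (x 0 + y 0) * (f₂ 1 - f₁ 1) = _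
        ring
      · intro c x
        show (c * x 1) * (f₂ 0 - f₁ 0) - (c * x 0) * (f₂ 1 - f₁ 1)
          = c * (x 1 * (f₂ 0 - f₁ 0) - x 0 * (f₂ 1 - f₁ 1))
        ring
    have hLp : p 1 * (f₂ 0 - f₁ 0) - p 0 * (f₂ 1 - f₁ 1)
        = ((f₁ 1 + f₂ 1)/2) * (f₂ 0 - f₁ 0) - ((f₁ 0 + f₂ 0)/2) * (f₂ 1 - f₁ 1) := by
      rw [hp0, hp1']
      linear_combination (((f₁ 1 + f₂ 1)/2) * (f₂ 0 - f₁ 0) - ((f₁ 0 + f₂ 0)/2) * (f₂ 1 - f₁ 1)) * hab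
    rcases lt_trichotomy
      ((M 1 - (f₁ 1 + f₂ 1)/2)*(f₂ 0 - f₁ 0) - (M 0 - (f₁ 0 + f₂ 0)/2)*(f₂ 1 - f₁ 1)) 0
      with hM' | hM' | hM'
    · have h1 : (e₁ 1 - (f₁ 1 + f₂ 1)/2)*(f₂ 0 - f₁ 0) - (e₁ 0 - (f₁ 0 + f₂ 0)/2)*(f₂ 1 - f₁ 1) < 0 := by
        rcases mul_pos_iff.mp hc1 with ⟨hA, hB⟩ | ⟨hA, hB⟩
        · linarith
        · linarith
      have h2 : (e₂ 1 - (f₁ 1 + f₂ 1)/2)*(f₂ 0 - f₁ 0) - (e₂ 0 - (f₁ 0 + f₂ 0)/2)*(f₂ 1 - f₁ 1) < 0 := by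
        rcases mul_pos_iff.mp hc2 with ⟨hA, hB⟩ | ⟨hA, hB⟩
        · linarith
        · linarith
      have hhull := convexHull_min (t := {z : EuclideanSpace ℝ (Fin 2) |
          z 1 * (f₂ 0 - f₁ 0) - z 0 * (f₂ 1 - f₁ 1)
            < ((f₁ 1 + f₂ 1)/2) * (f₂ 0 - f₁ 0) - ((f₁ 0 + f₂ 0)/2) * (f₂ 1 - f₁ 1)}) ?_
        (convex_halfSpace_lt hlin _) hp2
      · simp only [Set.mem_setOf_eq] at hhull
        linarith [hLp]
      · intro z hz
        simp only [Set.mem_insert_iff, Set.mem_singleton_iff] at hz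
        simp only [Set.mem_setOf_eq]
        rcases hz with rfl | rfl | rfl
        · linarith
        · linarith
        · linarith
    · have : ((e₁ 1 - (f₁ 1 + f₂ 1)/2)*(f₂ 0 - f₁ 0) - (e₁ 0 - (f₁ 0 + f₂ 0)/2)*(f₂ 1 - f₁ 1)) *
          ((M 1 - (f₁ 1 + f₂ 1)/2)*(f₂ 0 - f₁ 0) - (M 0 - (f₁ 0 + f₂ 0)/2)*(f₂ 1 - f₁ 1)) = 0 := by
        rw [hM', mul_zero]
      linarith
    · have h1 : 0 < (e₁ 1 - (f₁ 1 + f₂ 1)/2)*(f₂ 0 - f₁ 0) - (e₁ 0 - (f₁ 0 + f₂ 0)/2)*(f₂ 1 - f₁ 1) := by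
        rcases mul_pos_iff.mp hc1 with ⟨hA, hB⟩ | ⟨hA, hB⟩
        · linarith
        · linarith
      have h2 : 0 < (e₂ 1 - (f₁ 1 + f₂ 1)/2)*(f₂ 0 - f₁ 0) - (e₂ 0 - (f₁ 0 + f₂ 0)/2)*(f₂ 1 - f₁ 1) := by
        rcases mul_pos_iff.mp hc2 with ⟨hA, hB⟩ | ⟨hA, hB⟩
        · linarith
        · linarith
      have hhull := convexHull_min (t := {z : EuclideanSpace ℝ (Fin 2) |
          ((f₁ 1 + f₂ 1)/2) * (f₂ 0 - f₁ 0) - ((f₁ 0 + f₂ 0)/2) * (f₂ 1 - f₁ 1)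
            < z 1 * (f₂ 0 - f₁ 0) - z 0 * (f₂ 1 - f₁ 1)}) ?_
        (convex_halfSpace_gt hlin _) hp2
      · simp only [Set.mem_setOf_eq] at hhull
        linarith [hLp]
      · intro z hz
        simp only [Set.mem_insert_iff, Set.mem_singleton_iff] at hz
        simp only [Set.mem_setOf_eq]
        rcases hz with rfl | rfl | rfl
        · linarith
        · linarith
        · linarith
  -- conclude
  have hfφ : ∀ g : EuclideanSpace ℝ (Fin 2), g ∈ ({e₁, e₂, f₁, f₂} : Set _) →
      g ∈ Cbeta β f₁ f₂ → g = f₁ ∨ g = f₂ := by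
    intro g hgφ hgC
    have := hf.2.2.2 ⟨hgC, hgφ⟩
    simpa using this
  rcases step1 with hs | hs
  · have hinner := coordB r (f₁ 0) (f₁ 1) (f₂ 0) (f₂ 1) (e₁ 0) (e₁ 1) (M 0) (M 1) a b
      hUpos he1sq hf1sq hf2sq hpsq ha hb hab hs
    have := hfφ e₁ (by simp) (mem_Cbeta β (le_of_lt hβ) e₁ f₁ f₂ hinner)
    tauto
  · have hinner := coordB r (f₁ 0) (f₁ 1) (f₂ 0) (f₂ 1) (e₂ 0) (e₂ 1) (M 0) (M 1) a b
      hUpos he2sq hf1sq hf2sq hpsq ha hb hab hs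
    have := hfφ e₂ (by simp) (mem_Cbeta β (le_of_lt hβ) e₂ f₁ f₂ hinner)
    tauto
end

section
/- For every β > 1 there exists a constant c ∈ (0, 1/2), depending only on β, with the following property. Whenever e₁, e₂, f₁, f₂ ∈ ℝ² are pairwise distinct, both {e₁,e₂} and {f₁,f₂} are edges of the β-skeleton of {e₁,e₂,f₁,f₂}, and a > 0 satisfies dist(e₁,e₂) ≥ a and dist(f₁,f₂) ≥ a, then for all m ∈ [a/2, dist(e₁,e₂) − a/2] and m' ∈ [a/2, dist(f₁,f₂) − a/2], the closed balls of radius c·a centered at h_m(e₁,e₂) and at h_{m'}(f₁,f₂) are disjoint, where h_t(x,y) := x + t·(y−x)/dist(x,y) is the point on the segment [x,y] at distance t from x. -/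
open Metric Set

/-- The point on the segment `[x, y]` at distance `t` from `x`. -/
noncomputable def hpt (x y : EuclideanSpace ℝ (Fin 2)) (t : ℝ) : EuclideanSpace ℝ (Fin 2) :=
  x + (t / dist x y) • (y - x)

/-!
Put `κ = √(β² - 1)`. A point `z` lies outside `C_β(x, y)` exactly when it sees `[x, y]` under an
angle whose cotangent exceeds `κ`, i.e. `κ |ω (x - z) (y - z)| < ⟪x - z, y - z⟫` (`NarrowAngle`).
So every endpoint of one edge sees the other edge under an angle bounded away from `π / 2`.
Fix a small `η` depending on `κ` and suppose the chosen points `p`, `q` are within `2ca`.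

If all endpoints of one edge are at distance `≥ ηa` from those of the other, translate the edge
`[f₁, f₂]` by `p - q`: the segments then cross at `p`, and since the angles of the quadrilateral
sum to `2π`, one of the four endpoints sees the opposite segment under an angle `≥ π / 2`. As the
translation is small against `ηa`, this contradicts the narrow angle at that endpoint.

Otherwise two endpoints `x₁`, `y₁` are `ηa`-close. Since `p ≈ q` and `m, m' ≥ a / 2`, the two
edges leave `x₁ ≈ y₁` in nearly the same direction `u ≈ v`, and the narrow angles at `x₁` and at
`y₁` force both the component of `y₁ - x₁` along `v` and the one across it to be small against
`‖y₁ - x₁‖`; hence `x₁ = y₁`.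
-/

open Module
open scoped RealInnerProductSpace EuclideanSpace

section InnerProductSpace

variable {E : Type*} [NormedAddCommGroup E] [InnerProductSpace ℝ E]

theorem inner_nonpos_of_mem_openSegment_of_mem_openSegment {e₁ e₂ f₁ f₂ p : E}
    (he : p ∈ openSegment ℝ e₁ e₂) (hf : p ∈ openSegment ℝ f₁ f₂) :
    ⟪f₁ - e₁, f₂ - e₁⟫ ≤ 0 ∨ ⟪f₁ - e₂, f₂ - e₂⟫ ≤ 0 ∨
      ⟪e₁ - f₁, e₂ - f₁⟫ ≤ 0 ∨ ⟪e₁ - f₂, e₂ - f₂⟫ ≤ 0 := by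
  obtain ⟨a, b, ha, hb, hab, rfl⟩ := he
  obtain ⟨a', b', ha', hb', hab', hp⟩ := hf
  set U := e₂ - e₁
  set V := f₂ - f₁
  have h₁₁ : f₁ - e₁ = b • U - b' • V := by
    linear_combination (norm := module) hp - hab' • f₁ + hab • e₁
  have h₂₁ : f₂ - e₁ = b • U + a' • V := by
    linear_combination (norm := module) hp - hab' • f₂ + hab • e₁
  have h₁₂ : f₁ - e₂ = -a • U - b' • V := by
    linear_combination (norm := module) hp - hab' • f₁ + hab • e₂
  have h₂₂ : f₂ - e₂ = -a • U + a' • V := by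
    linear_combination (norm := module) hp - hab' • f₂ + hab • e₂
  rw [← neg_sub f₁ e₁, ← neg_sub f₁ e₂, ← neg_sub f₂ e₁, ← neg_sub f₂ e₂, inner_neg_neg,
    inner_neg_neg, h₁₁, h₂₁, h₁₂, h₂₂]
  simp only [inner_add_left, inner_add_right, inner_sub_left, inner_sub_right,
    real_inner_smul_left, real_inner_smul_right, real_inner_comm U V]
  -- the four inner products, weighted by `a`, `b`, `a'`, `b'`, sum to zero
  by_contra! h
  obtain ⟨h₁, h₂, h₃, h₄⟩ := h
  obtain rfl : a = 1 - b := by linarith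
  obtain rfl : a' = 1 - b' := by linarith
  linarith [mul_pos ha h₁, mul_pos hb h₂, mul_pos ha' h₃, mul_pos hb' h₄]

theorem mul_norm_sub_le_of_norm_smul_sub_smul_le {u v : E} {m m' b : ℝ} (hu : ‖u‖ = 1)
    (hv : ‖v‖ = 1) (hm : 0 ≤ m) (hm' : 0 ≤ m') (h : ‖m • u - m' • v‖ ≤ b) :
    m * ‖u - v‖ ≤ 2 * b := by
  have hmm' : |m' - m| ≤ b := by
    have := abs_norm_sub_norm_le (m' • v) (m • u)
    rw [norm_smul, norm_smul, hu, hv, Real.norm_of_nonneg hm, Real.norm_of_nonneg hm',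
      norm_sub_rev] at this
    simpa using this.trans h
  calc m * ‖u - v‖ = ‖m • (u - v)‖ := by rw [norm_smul, Real.norm_of_nonneg hm]
    _ = ‖(m • u - m' • v) + (m' - m) • v‖ := by congr 1; module
    _ ≤ ‖m • u - m' • v‖ + |m' - m| := by
        grw [norm_add_le, norm_smul, hv, Real.norm_eq_abs, mul_one]
    _ ≤ 2 * b := by linarith

end InnerProductSpace

section TwoDim

variable {E : Type*} [NormedAddCommGroup E] [InnerProductSpace ℝ E] [Fact (finrank ℝ E = 2)]
  (o : Orientation ℝ E (Fin 2))

local notation "ω" => o.areaForm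
local notation "J" => o.rightAngleRotation

def NarrowAngle (κ : ℝ) (x z y : E) : Prop :=
  κ * |ω (x - z) (y - z)| < ⟪x - z, y - z⟫

theorem dist_midpoint_add_smul_rightAngleRotation_sq (x y z : E) (e : ℝ) :
    dist z (midpoint ℝ x y + e • J (y - x)) ^ 2 =
      ⟪x - z, y - z⟫ - 2 * e * ω (x - z) (y - z) + (1 / 4 + e ^ 2) * dist x y ^ 2 := by
  have hyx : y - x = (y - z) - (x - z) := (sub_sub_sub_cancel_right y x z).symm
  have hz : z - (midpoint ℝ x y + e • J (y - x)) =
      (-1 / 2 : ℝ) • ((x - z) + (y - z)) - e • J ((y - z) - (x - z)) := by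
    rw [midpoint_eq_smul_add, invOf_eq_inv, ← hyx]; module
  rw [dist_eq_norm, hz, dist_eq_norm', hyx]
  generalize x - z = a
  generalize y - z = b
  rw [← real_inner_self_eq_norm_sq, ← real_inner_self_eq_norm_sq]
  simp only [inner_add_left, inner_add_right, inner_sub_left, inner_sub_right,
    real_inner_smul_left, real_inner_smul_right, map_add, map_sub, map_smul, LinearMap.add_apply,
    LinearMap.sub_apply, LinearMap.smul_apply, smul_eq_mul, o.inner_rightAngleRotation_left,
    o.inner_rightAngleRotation_right, o.areaForm_apply_self, o.areaForm_rightAngleRotation_left]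
  rw [o.areaForm_swap b a, real_inner_comm b a]
  ring

variable {o}

theorem NarrowAngle.symm {κ : ℝ} {x z y : E} (h : NarrowAngle o κ x z y) :
    NarrowAngle o κ y z x := by
  rwa [NarrowAngle, o.areaForm_swap, abs_neg, real_inner_comm]

theorem narrowAngle_iff {κ : ℝ} {x z y : E} :
    NarrowAngle o κ x z y ↔ ⟪z - x, y - x⟫ + κ * |ω (z - x) (y - x)| < ‖z - x‖ ^ 2 := by
  have hx : x - z = -(z - x) := (neg_sub z x).symm
  have hy : y - z = (y - x) - (z - x) := (sub_sub_sub_cancel_right y z x).symm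
  rw [NarrowAngle, hx, hy, map_neg, LinearMap.neg_apply, map_sub, o.areaForm_apply_self,
    sub_zero, abs_neg, inner_neg_left, inner_sub_right, real_inner_self_eq_norm_sq]
  constructor <;> intro h <;> linarith

theorem norm_le_abs_inner_add_abs_areaForm {v : E} (hv : ‖v‖ = 1) (w : E) :
    ‖w‖ ≤ |⟪w, v⟫| + |ω w v| := by
  have h := o.inner_sq_add_areaForm_sq w v
  rw [hv, one_pow, mul_one, ← sq_abs ⟪w, v⟫, ← sq_abs (ω w v)] at h
  nlinarith [abs_nonneg ⟪w, v⟫, abs_nonneg (ω w v), norm_nonneg w]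

theorem eq_zero_of_inner_add_abs_areaForm_le {u v w : E} {κ η ν : ℝ} (hκ : 0 < κ)
    (hv : ‖v‖ = 1) (huv : ‖u - v‖ ≤ ν)
    (h₁ : ⟪w, u⟫ + κ * |ω w u| ≤ η * ‖w‖) (h₂ : ⟪-w, v⟫ + κ * |ω (-w) v| ≤ η * ‖-w‖)
    (hsmall : 2 * κ * (η + ν) + 2 * η + (1 + κ) * ν < 2 * κ) : w = 0 := by
  rw [inner_neg_left, map_neg, LinearMap.neg_apply, abs_neg, norm_neg] at h₂
  by_contra hw
  have hρ : 0 < ‖w‖ := norm_pos_iff.2 hw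
  have hinner : |⟪w, u⟫ - ⟪w, v⟫| ≤ ‖w‖ * ν := by
    rw [← inner_sub_right]
    exact (abs_real_inner_le_norm w _).trans (mul_le_mul_of_nonneg_left huv hρ.le)
  have harea : |ω w u - ω w v| ≤ ‖w‖ * ν := by
    rw [← map_sub]
    exact (o.abs_areaForm_le w _).trans (mul_le_mul_of_nonneg_left huv hρ.le)
  have hA : |⟪w, v⟫| ≤ ‖w‖ * (η + ν) := by
    rw [abs_le] at hinner ⊢
    constructor <;> nlinarith [abs_nonneg (ω w u), abs_nonneg (ω w v)]
  have hB : 2 * κ * |ω w v| ≤ ‖w‖ * (2 * η + (1 + κ) * ν) := by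
    have := abs_sub_abs_le_abs_sub (ω w v) (ω w u)
    rw [abs_sub_comm] at this
    rw [abs_le] at hinner
    nlinarith
  have hC := norm_le_abs_inner_add_abs_areaForm (o := o) hv w
  nlinarith [mul_le_mul_of_nonneg_left hC (by positivity : (0 : ℝ) ≤ 2 * κ)]

theorem inner_add_abs_areaForm_le_of_narrowAngle {κ η : ℝ} {x z y : E} (hxy : x ≠ y)
    (h : NarrowAngle o κ x z y) (hz : ‖z - x‖ ≤ η * dist x y) :
    ⟪z - x, (dist x y)⁻¹ • (y - x)⟫ + κ * |ω (z - x) ((dist x y)⁻¹ • (y - x))| ≤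
      η * ‖z - x‖ := by
  have hd : 0 < dist x y := dist_pos.2 hxy
  rw [narrowAngle_iff] at h
  rw [inner_smul_right, map_smul, smul_eq_mul, abs_mul, abs_of_pos (inv_pos.2 hd),
    mul_left_comm, ← mul_add, inv_mul_le_iff₀ hd]
  nlinarith [mul_le_mul_of_nonneg_left hz (norm_nonneg (z - x))]

theorem inner_le_abs_areaForm_of_inner_nonpos {κ ρ : ℝ} {w₁ w₂ δ : E} (hκ : 0 < κ)
    (h₁ : ρ ≤ ‖w₁‖) (h₂ : ρ ≤ ‖w₂‖) (hδ : ‖δ‖ ≤ ρ / 16) (hδκ : ‖δ‖ ≤ κ * ρ / 16)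
    (hw : ⟪w₁, w₂⟫ ≤ 0) : ⟪w₁ + δ, w₂ + δ⟫ ≤ κ * |ω (w₁ + δ) (w₂ + δ)| := by
  set r₁ := ‖w₁‖
  set r₂ := ‖w₂‖
  set τ := ‖δ‖
  have hτ : 0 ≤ τ := norm_nonneg δ
  have hinner : ⟪w₁ + δ, w₂ + δ⟫ ≤ ⟪w₁, w₂⟫ + τ * (r₁ + r₂) + τ ^ 2 := by
    have e₁ := real_inner_le_norm w₁ δ
    have e₂ := real_inner_le_norm δ w₂
    rw [inner_add_left, inner_add_right, inner_add_right, real_inner_self_eq_norm_sq]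
    nlinarith
  have harea : |ω w₁ w₂| - τ * (r₁ + r₂) ≤ |ω (w₁ + δ) (w₂ + δ)| := by
    have e : ω (w₁ + δ) (w₂ + δ) = ω w₁ w₂ + (ω w₁ δ + ω δ w₂) := by
      simp only [map_add, LinearMap.add_apply, o.areaForm_apply_self]; ring
    have e₁ := o.abs_areaForm_le w₁ δ
    have e₂ := o.abs_areaForm_le δ w₂
    have e₃ := abs_sub_abs_le_abs_sub (ω w₁ w₂) (-(ω w₁ δ + ω δ w₂))
    rw [sub_neg_eq_add, ← e, abs_neg] at e₃
    have e₄ := abs_add_le (ω w₁ δ) (ω δ w₂)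
    nlinarith
  have hτ₁ : τ * r₁ ≤ r₁ * r₂ / 16 := by nlinarith
  have hτ₂ : τ * r₂ ≤ r₁ * r₂ / 16 := by nlinarith
  have hτκ₁ : τ * r₁ ≤ κ * (r₁ * r₂) / 16 := by
    nlinarith [mul_le_mul_of_nonneg_right hδκ (norm_nonneg w₁),
      mul_le_mul_of_nonneg_left h₂ (mul_nonneg hκ.le (norm_nonneg w₁))]
  have hτκ₂ : τ * r₂ ≤ κ * (r₁ * r₂) / 16 := by
    nlinarith [mul_le_mul_of_nonneg_right hδκ (norm_nonneg w₂),
      mul_le_mul_of_nonneg_left h₁ (mul_nonneg hκ.le (norm_nonneg w₂))]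
  have hττ : τ ^ 2 ≤ κ * (r₁ * r₂) / 256 := by nlinarith
  rcases le_or_gt ⟪w₁, w₂⟫ (-(r₁ * r₂) / 2) with hobtuse | hacute
  · nlinarith [abs_nonneg (ω (w₁ + δ) (w₂ + δ))]
  · -- the area term, at least `r₁ r₂ / 2`, dominates the perturbation
    have hlag := o.inner_sq_add_areaForm_sq w₁ w₂
    have hbig : r₁ * r₂ / 2 ≤ |ω w₁ w₂| := by
      rw [← sq_abs (ω w₁ w₂)] at hlag
      nlinarith [abs_nonneg (ω w₁ w₂), mul_nonneg (norm_nonneg w₁) (norm_nonneg w₂)]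
    nlinarith [mul_le_mul_of_nonneg_left (hbig.trans (by linarith [harea] :
      |ω w₁ w₂| ≤ |ω (w₁ + δ) (w₂ + δ)| + τ * (r₁ + r₂))) hκ.le]

theorem not_narrowAngle_of_inner_nonpos {κ ρ : ℝ} {x y z z' : E} (hκ : 0 < κ)
    (hx : ρ ≤ dist x z) (hy : ρ ≤ dist y z) (hz : dist z z' ≤ ρ / 32)
    (hzκ : dist z z' ≤ κ * ρ / 32) (h : ⟪x - z', y - z'⟫ ≤ 0) :
    ¬ NarrowAngle o κ x z y := by
  have hfar : ∀ w, ρ ≤ dist w z → ρ / 2 ≤ ‖w - z'‖ := fun w hw => by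
    rw [← dist_eq_norm]
    linarith [dist_triangle w z' z, dist_comm z z', dist_nonneg (x := z) (y := z')]
  have key := inner_le_abs_areaForm_of_inner_nonpos (o := o) (δ := z' - z) hκ (hfar x hx)
    (hfar y hy) (by rw [← dist_eq_norm']; linarith) (by rw [← dist_eq_norm']; linarith) h
  simp only [sub_add_sub_cancel] at key
  exact key.not_gt

theorem lt_dist_of_narrowAngle {κ ρ : ℝ} {e₁ e₂ f₁ f₂ p q : E} (hκ : 0 < κ)
    (hp : p ∈ openSegment ℝ e₁ e₂) (hq : q ∈ openSegment ℝ f₁ f₂)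
    (h₁₁ : ρ ≤ dist e₁ f₁) (h₁₂ : ρ ≤ dist e₁ f₂) (h₂₁ : ρ ≤ dist e₂ f₁) (h₂₂ : ρ ≤ dist e₂ f₂)
    (he₁ : NarrowAngle o κ f₁ e₁ f₂) (he₂ : NarrowAngle o κ f₁ e₂ f₂)
    (hf₁ : NarrowAngle o κ e₁ f₁ e₂) (hf₂ : NarrowAngle o κ e₁ f₂ e₂) :
    min (ρ / 32) (κ * ρ / 32) < dist p q := by
  by_contra! hpq
  obtain ⟨hδ, hδκ⟩ := le_min_iff.1 hpq
  set δ := p - q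
  have hδ' : ‖δ‖ = dist p q := (dist_eq_norm p q).symm
  have hq' : p ∈ openSegment ℝ (δ + f₁) (δ + f₂) := by
    rw [← sub_add_cancel p q]; exact (mem_openSegment_translate ℝ δ).2 hq
  have hvert : ∀ x y : E, x - (y - δ) = δ + x - y := fun x y => by abel
  rcases inner_nonpos_of_mem_openSegment_of_mem_openSegment hp hq' with h | h | h | h
  · refine not_narrowAngle_of_inner_nonpos (z' := e₁ - δ) hκ (dist_comm e₁ f₁ ▸ h₁₁)
      (dist_comm e₁ f₂ ▸ h₁₂) ?_ ?_ (by rwa [hvert, hvert]) he₁ <;>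
    rwa [dist_self_sub_right, hδ']
  · refine not_narrowAngle_of_inner_nonpos (z' := e₂ - δ) hκ (dist_comm e₂ f₁ ▸ h₂₁)
      (dist_comm e₂ f₂ ▸ h₂₂) ?_ ?_ (by rwa [hvert, hvert]) he₂ <;>
    rwa [dist_self_sub_right, hδ']
  · refine not_narrowAngle_of_inner_nonpos (z' := δ + f₁) hκ h₁₁ h₂₁ ?_ ?_ h hf₁ <;>
    rwa [add_comm δ, dist_self_add_right, hδ']
  · refine not_narrowAngle_of_inner_nonpos (z' := δ + f₂) hκ h₁₂ h₂₂ ?_ ?_ h hf₂ <;>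
    rwa [add_comm δ, dist_self_add_right, hδ']

end TwoDim

theorem mem_Cbeta_of_inner_le (o : Orientation ℝ (EuclideanSpace ℝ (Fin 2)) (Fin 2)) {β e : ℝ}
    {x y z : EuclideanSpace ℝ (Fin 2)} (hβ : 0 ≤ β) (he : 4 * e ^ 2 = β ^ 2 - 1)
    (h : ⟪x - z, y - z⟫ ≤ 2 * e * o.areaForm (x - z) (y - z)) : z ∈ Cbeta β x y := by
  have hr : 0 ≤ β * dist x y / 2 := by positivity
  have hM : ∀ w, dist w (midpoint ℝ x y + e • o.rightAngleRotation (y - x)) ^ 2 =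
      ⟪x - w, y - w⟫ - 2 * e * o.areaForm (x - w) (y - w) + (β * dist x y / 2) ^ 2 := by
    intro w
    rw [dist_midpoint_add_smul_rightAngleRotation_sq]
    linear_combination (dist x y ^ 2 / 4) * he
  refine ⟨midpoint ℝ x y + e • o.rightAngleRotation (y - x), ?_, ?_, ?_⟩
  · rw [dist_comm, ← sq_eq_sq₀ dist_nonneg hr, hM]; simp
  · rw [dist_comm, ← sq_eq_sq₀ dist_nonneg hr, hM]; simp
  · rw [← sq_le_sq₀ dist_nonneg hr, hM]; linarith

theorem narrowAngle_of_notMem_Cbeta (o : Orientation ℝ (EuclideanSpace ℝ (Fin 2)) (Fin 2))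
    {β : ℝ} {x y z : EuclideanSpace ℝ (Fin 2)} (hβ : 1 ≤ β) (h : z ∉ Cbeta β x y) :
    NarrowAngle o √(β ^ 2 - 1) x z y := by
  by_contra hn
  rw [NarrowAngle, not_lt] at hn
  have hsq : √(β ^ 2 - 1) ^ 2 = β ^ 2 - 1 := Real.sq_sqrt (by nlinarith)
  rcases le_total 0 (o.areaForm (x - z) (y - z)) with hω | hω
  · refine h (mem_Cbeta_of_inner_le o (e := √(β ^ 2 - 1) / 2) (by linarith) ?_ ?_)
    · rw [div_pow, hsq]; ring
    · rw [abs_of_nonneg hω] at hn; linarith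
  · refine h (mem_Cbeta_of_inner_le o (e := -√(β ^ 2 - 1) / 2) (by linarith) ?_ ?_)
    · rw [div_pow, neg_sq, hsq]; ring
    · rw [abs_of_nonpos hω] at hn; linarith

theorem IsSkelEdge.narrowAngle (o : Orientation ℝ (EuclideanSpace ℝ (Fin 2)) (Fin 2))
    {β : ℝ} {φ : Set (EuclideanSpace ℝ (Fin 2))} {x y z : EuclideanSpace ℝ (Fin 2)}
    (h : IsSkelEdge β φ x y) (hβ : 1 ≤ β) (hz : z ∈ φ) (hzx : z ≠ x) (hzy : z ≠ y) :
    NarrowAngle o √(β ^ 2 - 1) x z y :=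
  narrowAngle_of_notMem_Cbeta o hβ fun hC => by
    rcases h.2.2.2 ⟨hC, hz⟩ with rfl | rfl
    exacts [hzx rfl, hzy rfl]

theorem hpt_eq_add_smul (x y : EuclideanSpace ℝ (Fin 2)) (t : ℝ) :
    hpt x y t = x + t • ((dist x y)⁻¹ • (y - x)) := by
  rw [hpt, div_eq_mul_inv, mul_smul]

theorem hpt_symm {x y : EuclideanSpace ℝ (Fin 2)} (h : x ≠ y) (t : ℝ) :
    hpt y x (dist x y - t) = hpt x y t := by
  rw [hpt, hpt, dist_comm y x, sub_div, div_self (dist_ne_zero.2 h)]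
  module

theorem hpt_mem_openSegment {x y : EuclideanSpace ℝ (Fin 2)} {t : ℝ} (ht₀ : 0 < t)
    (ht : t < dist x y) : hpt x y t ∈ openSegment ℝ x y := by
  have hd : 0 < dist x y := ht₀.trans ht
  refine ⟨1 - t / dist x y, t / dist x y, by rw [sub_pos, div_lt_one hd]; exact ht,
    by positivity, by ring, ?_⟩
  rw [hpt]; module

theorem eq_of_dist_hpt_le {o : Orientation ℝ (EuclideanSpace ℝ (Fin 2)) (Fin 2)}
    {κ η a m m' : ℝ} {x₁ x₂ y₁ y₂ : EuclideanSpace ℝ (Fin 2)} (hκ : 0 < κ)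
    (hη : η * (13 * κ + 5) < κ) (ha : 0 < a) (hx : a ≤ dist x₁ x₂) (hy : a ≤ dist y₁ y₂)
    (hm : a / 2 ≤ m) (hm' : a / 2 ≤ m') (hxy : dist x₁ y₁ ≤ η * a)
    (hpq : dist (hpt x₁ x₂ m) (hpt y₁ y₂ m') ≤ η * a)
    (h₁ : NarrowAngle o κ x₁ y₁ x₂) (h₂ : NarrowAngle o κ y₁ x₁ y₂) : x₁ = y₁ := by
  have hx₀ : x₁ ≠ x₂ := dist_pos.1 (ha.trans_le hx)
  have hy₀ : y₁ ≠ y₂ := dist_pos.1 (ha.trans_le hy)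
  have hη₀ : 0 ≤ η := nonneg_of_mul_nonneg_left (dist_nonneg.trans hxy) ha
  set u := (dist x₁ x₂)⁻¹ • (x₂ - x₁)
  set v := (dist y₁ y₂)⁻¹ • (y₂ - y₁)
  have hunit : ∀ {x y : EuclideanSpace ℝ (Fin 2)}, x ≠ y → ‖(dist x y)⁻¹ • (y - x)‖ = 1 :=
    fun hne => by rw [dist_eq_norm']; exact norm_smul_inv_norm (sub_ne_zero.2 hne.symm)
  have hw : ‖y₁ - x₁‖ ≤ η * a := by rwa [← dist_eq_norm']
  have hmuv : ‖m • u - m' • v‖ ≤ 2 * (η * a) := by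
    have : m • u - m' • v = (hpt x₁ x₂ m - hpt y₁ y₂ m') + (y₁ - x₁) := by
      rw [hpt_eq_add_smul, hpt_eq_add_smul]; abel
    rw [this, two_mul]
    exact (norm_add_le _ _).trans (add_le_add (by rwa [← dist_eq_norm]) hw)
  have huv : ‖u - v‖ ≤ 8 * η := by
    have := mul_norm_sub_le_of_norm_smul_sub_smul_le (hunit hx₀) (hunit hy₀) (by linarith)
      (by linarith) hmuv
    nlinarith [norm_nonneg (u - v)]
  have h₁' := inner_add_abs_areaForm_le_of_narrowAngle hx₀ h₁
    (hw.trans (mul_le_mul_of_nonneg_left hx hη₀))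
  have h₂' := inner_add_abs_areaForm_le_of_narrowAngle hy₀ h₂
    ((dist_eq_norm' y₁ x₁ ▸ dist_comm x₁ y₁ ▸ hxy).trans (mul_le_mul_of_nonneg_left hy hη₀))
  rw [← neg_sub] at h₂'
  exact (sub_eq_zero.1 (eq_zero_of_inner_add_abs_areaForm_le hκ (hunit hy₀) huv h₁' h₂'
    (by nlinarith))).symm

theorem lt_dist_hpt_of_narrowAngle {o : Orientation ℝ (EuclideanSpace ℝ (Fin 2)) (Fin 2)}
    {κ η a m m' : ℝ} {e₁ e₂ f₁ f₂ : EuclideanSpace ℝ (Fin 2)} (hκ : 0 < κ) (hη₀ : 0 ≤ η)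
    (hη : η * (13 * κ + 5) < κ) (h1f1 : e₁ ≠ f₁) (h1f2 : e₁ ≠ f₂) (h2f1 : e₂ ≠ f₁)
    (h2f2 : e₂ ≠ f₂) (ha : 0 < a) (hae : a ≤ dist e₁ e₂) (haf : a ≤ dist f₁ f₂)
    (hm : m ∈ Icc (a / 2) (dist e₁ e₂ - a / 2)) (hm' : m' ∈ Icc (a / 2) (dist f₁ f₂ - a / 2))
    (he₁ : NarrowAngle o κ f₁ e₁ f₂) (he₂ : NarrowAngle o κ f₁ e₂ f₂)
    (hf₁ : NarrowAngle o κ e₁ f₁ e₂) (hf₂ : NarrowAngle o κ e₁ f₂ e₂) :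
    min (η * a / 32) (κ * (η * a) / 32) < dist (hpt e₁ e₂ m) (hpt f₁ f₂ m') := by
  have h12 : e₁ ≠ e₂ := dist_pos.1 (ha.trans_le hae)
  have hff : f₁ ≠ f₂ := dist_pos.1 (ha.trans_le haf)
  by_cases hfar : η * a ≤ dist e₁ f₁ ∧ η * a ≤ dist e₁ f₂ ∧ η * a ≤ dist e₂ f₁ ∧ η * a ≤ dist e₂ f₂
  · obtain ⟨h₁₁, h₁₂, h₂₁, h₂₂⟩ := hfar
    exact lt_dist_of_narrowAngle hκ
      (hpt_mem_openSegment (by linarith [hm.1]) (by linarith [hm.2]))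
      (hpt_mem_openSegment (by linarith [hm'.1]) (by linarith [hm'.2]))
      h₁₁ h₁₂ h₂₁ h₂₂ he₁ he₂ hf₁ hf₂
  by_contra! hpq
  replace hpq : dist (hpt e₁ e₂ m) (hpt f₁ f₂ m') ≤ η * a :=
    (hpq.trans (min_le_left _ _)).trans (by nlinarith)
  simp only [not_and_or, not_le] at hfar
  rcases hfar with h | h | h | h
  · exact h1f1 (eq_of_dist_hpt_le hκ hη ha hae haf hm.1 hm'.1 h.le hpq hf₁ he₁)
  · rw [← hpt_symm hff] at hpq
    exact h1f2 (eq_of_dist_hpt_le hκ hη ha hae (by rwa [dist_comm]) hm.1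
      (by linarith [hm'.2]) h.le hpq hf₂ he₁.symm)
  · rw [← hpt_symm h12] at hpq
    exact h2f1 (eq_of_dist_hpt_le hκ hη ha (by rwa [dist_comm]) haf
      (by linarith [hm.2]) hm'.1 h.le hpq hf₁.symm he₂)
  · rw [← hpt_symm h12, ← hpt_symm hff] at hpq
    exact h2f2 (eq_of_dist_hpt_le hκ hη ha (by rwa [dist_comm]) (by rwa [dist_comm])
      (by linarith [hm.2]) (by linarith [hm'.2]) h.le hpq hf₂.symm he₂.symm)

theorem stmt1 (β : ℝ) (hβ : 1 < β) :
    ∃ c : ℝ, 0 < c ∧ c < 1 / 2 ∧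
      ∀ e₁ e₂ f₁ f₂ : EuclideanSpace ℝ (Fin 2),
        e₁ ≠ e₂ → e₁ ≠ f₁ → e₁ ≠ f₂ → e₂ ≠ f₁ → e₂ ≠ f₂ → f₁ ≠ f₂ →
        IsSkelEdge β {e₁, e₂, f₁, f₂} e₁ e₂ →
        IsSkelEdge β {e₁, e₂, f₁, f₂} f₁ f₂ →
        ∀ a : ℝ, 0 < a → a ≤ dist e₁ e₂ → a ≤ dist f₁ f₂ →
        ∀ m m' : ℝ, m ∈ Set.Icc (a / 2) (dist e₁ e₂ - a / 2) →
          m' ∈ Set.Icc (a / 2) (dist f₁ f₂ - a / 2) →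
          Disjoint (closedBall (hpt e₁ e₂ m) (c * a)) (closedBall (hpt f₁ f₂ m') (c * a)) := by
  set κ := √(β ^ 2 - 1)
  have hκ : 0 < κ := Real.sqrt_pos.2 (by nlinarith)
  set η := κ / (64 * (κ + 1))
  have hη₀ : 0 < η := by positivity
  have hη₁ : η < 1 := by rw [div_lt_one (by positivity)]; linarith
  have hη : η * (13 * κ + 5) < κ := by
    rw [div_mul_eq_mul_div, div_lt_iff₀ (by positivity)]; nlinarith
  refine ⟨η * min 1 κ / 64, by positivity, by nlinarith [min_le_left 1 κ], ?_⟩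
  intro e₁ e₂ f₁ f₂ _ h1f1 h1f2 h2f1 h2f2 _ he hf a ha hae haf m m' hm hm'
  let o : Orientation ℝ (EuclideanSpace ℝ (Fin 2)) (Fin 2) :=
    (EuclideanSpace.basisFun (Fin 2) ℝ).toBasis.orientation
  refine closedBall_disjoint_closedBall (lt_of_le_of_lt ?_ (lt_dist_hpt_of_narrowAngle hκ
    hη₀.le hη h1f1 h1f2 h2f1 h2f2 ha hae haf hm hm'
    (hf.narrowAngle o hβ.le (by simp) h1f1 h1f2) (hf.narrowAngle o hβ.le (by simp) h2f1 h2f2)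
    (he.narrowAngle o hβ.le (by simp) h1f1.symm h2f1.symm)
    (he.narrowAngle o hβ.le (by simp) h1f2.symm h2f2.symm)))
  have hηa : 0 ≤ η * a := by positivity
  rw [le_min_iff]
  constructor
  · nlinarith [mul_le_mul_of_nonneg_left (min_le_left 1 κ) hηa]
  · nlinarith [mul_le_mul_of_nonneg_left (min_le_right 1 κ) hηa]
end

section
/- Let β > 1 and set τ := arccos(1/β). Let e₁, e₂, f₁, f₂ ∈ ℝ² be pairwise distinct points such that both {e₁,e₂} and {f₁,f₂} are edges of the β-skeleton of {e₁,e₂,f₁,f₂}, and assume dist(f₁,f₂) ≤ tan(τ)·dist(e₁,e₂). Let y ∈ C_β(e₁,e₂) be a point such that the segment [f₁,f₂] crosses the triangle conv{y, e₁, e₂} between the segment [e₁,e₂] and y, i.e., [f₁,f₂] intersects both segments [y,e₁] and [y,e₂]. Then y ∈ conv{M, f₁, f₂} for some point M ∈ ℝ² with dist(M,f₁) = dist(M,f₂) = β·dist(f₁,f₂)/2. -/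
open Metric Set

/-!
Let `N` be the centre of the disk of radius `R = β·dist(e₁,e₂)/2` in `C_β(e₁,e₂)` that contains
`y`, let `d = dist(f₁,f₂)` and `s = tan τ = √(β² - 1)`, and move `f₁, f₂` to `(∓d/2, 0)` by an
isometry. The disk contains the point where `[f₁,f₂]` crosses `[y,e₁]` but not `f₁, f₂`, so its
chord on the axis lies inside `[f₁,f₂]`; with `d ≤ s·dist(e₁,e₂)` this puts `N` at distance at
least `d/(2s)` from the axis. Hence the part of the disk on the far side of the axis from `N` lies in
the triangle with base `[f₁,f₂]` and apex `(0, ±s·d/2)`, a centre of a `β`-disk of `f₁f₂`. Since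
`y` and `e₁` are on opposite sides of the axis, one of them lies in that part. It is not `e₁`, which
lies outside both `β`-disks of `f₁f₂` and so at distance more than `s·d` from the axis.
-/

local notation "ℝ²" => EuclideanSpace ℝ (Fin 2)

/- In the next three lemmas `(p, q)` is the centre and `R` the radius of a disk and `c` is the
half-length of its chord on the axis `{b = 0}`. -/

theorem abs_add_lt_of_chord {d p q R c x : ℝ} (hc : 0 ≤ c) (hc2 : c ^ 2 = R ^ 2 - q ^ 2)
    (hx : (x - p) ^ 2 + q ^ 2 ≤ R ^ 2) (hxd : |x| ≤ d / 2)
    (h₁ : R ^ 2 < (-(d / 2) - p) ^ 2 + q ^ 2) (h₂ : R ^ 2 < (d / 2 - p) ^ 2 + q ^ 2) :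
    |p| + c < d / 2 := by
  obtain ⟨hxp₁, hxp₂⟩ := abs_le_of_sq_le_sq' (a := x - p) (by linarith) hc
  have h₁' : c < |-(d / 2) - p| := by
    rw [← abs_of_nonneg hc]; exact sq_lt_sq.1 (by linarith)
  have h₂' : c < |d / 2 - p| := by
    rw [← abs_of_nonneg hc]; exact sq_lt_sq.1 (by linarith)
  rw [abs_le] at hxd
  rw [lt_abs] at h₁' h₂'
  have : |p| < d / 2 - c := abs_lt.2 ⟨by rcases h₁' with h | h <;> linarith,
    by rcases h₂' with h | h <;> linarith⟩
  linarith

theorem le_two_mul_abs_of_chord {β s d R q : ℝ} (hs : s ^ 2 = β ^ 2 - 1) (hs0 : 0 ≤ s)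
    (hβd : 0 ≤ β * d) (hR : β * d ≤ 2 * s * R) (hRq : R ^ 2 - q ^ 2 ≤ (d / 2) ^ 2) :
    d ≤ 2 * s * |q| := by
  have h₁ : (β * d) ^ 2 ≤ (2 * s * R) ^ 2 := pow_le_pow_left₀ hβd hR 2
  have h₂ : s ^ 2 * (R ^ 2 - q ^ 2) ≤ s ^ 2 * (d / 2) ^ 2 :=
    mul_le_mul_of_nonneg_left hRq (sq_nonneg s)
  refine (le_abs_self d).trans (abs_le_of_sq_le_sq ?_ (by positivity))
  rw [mul_pow, sq_abs]
  linear_combination h₁ + 4 * h₂ + d ^ 2 * hs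

theorem abs_le_of_mem_cap {s d p q R c a b : ℝ} (hd : 0 < d) (hs : 0 ≤ s)
    (hq : d ≤ 2 * s * |q|) (hc : 0 ≤ c) (hc2 : c ^ 2 = R ^ 2 - q ^ 2) (hchord : |p| + c < d / 2)
    (hab : (a - p) ^ 2 + (b - q) ^ 2 ≤ R ^ 2) (hbq : b * q ≤ 0) :
    |a| ≤ d / 2 ∧ |b| ≤ s * (d / 2 - |a|) := by
  have hbq' : |q| * |b| = -(b * q) := by rw [← abs_mul, mul_comm, abs_of_nonpos hbq]
  have hcap : |a - p| ^ 2 + 2 * |q| * |b| ≤ c ^ 2 := by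
    rw [sq_abs]; nlinarith [sq_nonneg b]
  have hap : |a - p| ≤ c := abs_le_of_sq_le_sq (by nlinarith [abs_nonneg q, abs_nonneg b]) hc
  have ha : |a| - |p| ≤ |a - p| := abs_sub_abs_le_abs_sub a p
  have hcap' : 2 * |q| * |b| ≤ (d / 2 - |a|) * d := calc
    2 * |q| * |b| ≤ (c - |a - p|) * (c + |a - p|) := by linarith
    _ ≤ (d / 2 - |a|) * d := by
      have := abs_nonneg p
      exact mul_le_mul (by linarith) (by linarith) (by positivity) (by linarith)
  refine ⟨by linarith [abs_nonneg p], le_of_mul_le_mul_left ?_ hd⟩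
  calc d * |b| ≤ 2 * s * |q| * |b| := mul_le_mul_of_nonneg_right hq (abs_nonneg b)
    _ = s * (2 * |q| * |b|) := by ring
    _ ≤ s * ((d / 2 - |a|) * d) := mul_le_mul_of_nonneg_left hcap' hs
    _ = d * (s * (d / 2 - |a|)) := by ring

theorem lt_abs_of_lt_sq_add_sq {β s d a b : ℝ} (hs : s ^ 2 = β ^ 2 - 1)
    (ha : |a| ≤ d / 2) (h₁ : (β * d / 2) ^ 2 < a ^ 2 + (b - s * d / 2) ^ 2)
    (h₂ : (β * d / 2) ^ 2 < a ^ 2 + (b + s * d / 2) ^ 2) : s * d < |b| := by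
  have ha' : a ^ 2 ≤ (d / 2) ^ 2 := by
    rw [← sq_abs a]; exact pow_le_pow_left₀ (abs_nonneg a) ha 2
  have hb : (s * d / 2) ^ 2 < (|b| - s * d / 2) ^ 2 := by
    rcases abs_cases b with ⟨hb, -⟩ | ⟨hb, -⟩ <;> rw [hb]
    · linear_combination h₁ + ha' + (d / 2) ^ 2 * hs
    · linear_combination h₂ + ha' + (d / 2) ^ 2 * hs
  nlinarith [abs_nonneg b]

theorem mul_nonpos_of_zero_mem_segment {u v : ℝ} (h : (0 : ℝ) ∈ segment ℝ u v) : u * v ≤ 0 := by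
  rw [segment_eq_uIcc, mem_uIcc] at h
  rcases h with ⟨hu, hv⟩ | ⟨hv, hu⟩
  · exact mul_nonpos_of_nonpos_of_nonneg hu hv
  · exact mul_nonpos_of_nonneg_of_nonpos hu hv

theorem Real.tan_arccos_inv {β : ℝ} (hβ : 0 < β) : tan (arccos β⁻¹) = √(β ^ 2 - 1) := by
  have h : β ^ 2 - 1 = (1 - β⁻¹ ^ 2) * β ^ 2 := by field_simp
  rw [tan_arccos, h, sqrt_mul' _ (sq_nonneg β), sqrt_sq hβ.le, div_inv_eq_mul]

theorem smul_add_smul_add_smul_mem_convexHull {E : Type*} [AddCommGroup E] [Module ℝ E]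
    {x y z : E} {a b c : ℝ} (ha : 0 ≤ a) (hb : 0 ≤ b) (hc : 0 ≤ c) (habc : a + b + c = 1) :
    a • x + b • y + c • z ∈ convexHull ℝ {x, y, z} := by
  have := (convex_convexHull ℝ {x, y, z}).sum_mem (t := Finset.univ) (w := ![a, b, c])
    (z := ![x, y, z]) (by simp [Fin.forall_fin_succ, ha, hb, hc])
    (by simp [Fin.sum_univ_three, habc])
    (fun i _ => subset_convexHull ℝ _ (by fin_cases i <;> simp))
  simpa [Fin.sum_univ_three] using this

theorem apply_mem_segment {ι : Type*} {x y z : EuclideanSpace ℝ ι} (h : z ∈ segment ℝ x y)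
    (i : ι) : z i ∈ segment ℝ (x i) (y i) := by
  obtain ⟨a, b, ha, hb, hab, rfl⟩ := h
  exact ⟨a, b, ha, hb, hab, by simp⟩

theorem dist_sq_eq_fin_two (z w : ℝ²) : dist z w ^ 2 = (z 0 - w 0) ^ 2 + (z 1 - w 1) ^ 2 := by
  rw [EuclideanSpace.dist_eq, Real.sq_sqrt (by positivity)]
  simp [Fin.sum_univ_two, Real.dist_eq]

theorem dist_apex_base {β s d h x : ℝ} (hs : s ^ 2 = β ^ 2 - 1) (hβd : 0 ≤ β * d)
    (hh : |h| = s * d / 2) (hx : |x| = d / 2) : dist !₂[0, h] !₂[x, 0] = β * d / 2 := by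
  have hx2 : x ^ 2 = (d / 2) ^ 2 := by rw [← sq_abs, hx]
  have hh2 : h ^ 2 = (s * d / 2) ^ 2 := by rw [← sq_abs, hh]
  rw [← sq_eq_sq₀ dist_nonneg (by positivity), dist_sq_eq_fin_two]
  simp only [Fin.isValue, Matrix.cons_val_zero, Matrix.cons_val_one, Matrix.cons_val_fin_one]
  linear_combination hx2 + hh2 + (d ^ 2 / 4) * hs

theorem exists_apex_mem_convexHull {d s : ℝ} (hd : 0 < d) (hs : 0 < s) {z : ℝ²}
    (hz : |z 1| ≤ s * (d / 2 - |z 0|)) :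
    ∃ h, |h| = s * d / 2 ∧ z ∈ convexHull ℝ {!₂[0, h], !₂[-(d / 2), 0], !₂[d / 2, 0]} := by
  have hsd : 0 < s * d / 2 := by positivity
  obtain ⟨h, hh, hzh⟩ : ∃ h, |h| = s * d / 2 ∧ 0 ≤ z 1 * h := by
    rcases le_total 0 (z 1) with hz1 | hz1
    · exact ⟨s * d / 2, abs_of_pos hsd, mul_nonneg hz1 hsd.le⟩
    · exact ⟨-(s * d / 2), by rw [abs_neg, abs_of_pos hsd],
        mul_nonneg_of_nonpos_of_nonpos hz1 (by linarith)⟩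
  have hh0 : h ≠ 0 := by rw [← abs_ne_zero, hh]; exact hsd.ne'
  set t := z 1 / h
  have ht : 0 ≤ t := by
    have := div_nonneg hzh (sq_nonneg h)
    rwa [pow_two, mul_div_mul_right _ _ hh0] at this
  have htd : t * (d / 2) = |z 1| / s := by
    rw [← abs_of_nonneg ht, abs_div, hh]; field_simp
  have hz0 : |z 0| ≤ (1 - t) * (d / 2) := by
    have := (div_le_iff₀ hs).2 (show |z 1| ≤ (d / 2 - |z 0|) * s by linarith)
    linarith
  obtain ⟨hz₁, hz₂⟩ := abs_le.1 hz0
  refine ⟨h, hh, ?_⟩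
  -- `z = t • apex + (1 - t) • (point of the base)`
  convert smul_add_smul_add_smul_mem_convexHull (x := !₂[0, h]) (y := !₂[-(d / 2), 0])
    (z := !₂[d / 2, 0]) ht (div_nonneg (sub_nonneg.2 hz₂) hd.le)
    (div_nonneg (neg_le_iff_add_nonneg.1 hz₁) hd.le) (by field_simp; ring)
  ext i
  fin_cases i
  · simp only [Fin.zero_eta, Fin.isValue, PiLp.add_apply, PiLp.smul_apply, Matrix.cons_val_zero,
      smul_eq_mul, mul_zero, mul_neg, zero_add]
    field_simp
    ring
  · simp only [Fin.mk_one, Fin.isValue, PiLp.add_apply, PiLp.smul_apply, Matrix.cons_val_one,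
      Matrix.cons_val_fin_one, smul_eq_mul, mul_zero, add_zero, t]
    field_simp

theorem exists_mem_convexHull_of_crossing_axis {β s d R : ℝ} {N e y g : ℝ²}
    (hs : s ^ 2 = β ^ 2 - 1) (hs0 : 0 < s) (hβ : 0 ≤ β) (hd : 0 < d) (hR : β * d ≤ 2 * s * R)
    (hy : dist y N ≤ R) (he : dist e N ≤ R)
    (hf₁ : R < dist !₂[-(d / 2), 0] N) (hf₂ : R < dist !₂[d / 2, 0] N)
    (he_out : ∀ h, |h| = s * d / 2 → β * d / 2 < dist e !₂[0, h])
    (hg₁ : g ∈ segment ℝ !₂[-(d / 2), 0] !₂[d / 2, 0]) (hg₂ : g ∈ segment ℝ y e) :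
    ∃ h, |h| = s * d / 2 ∧ y ∈ convexHull ℝ {!₂[0, h], !₂[-(d / 2), 0], !₂[d / 2, 0]} := by
  have hR0 : 0 ≤ R := dist_nonneg.trans hy
  have sq_le {z : ℝ²} (hz : dist z N ≤ R) : (z 0 - N 0) ^ 2 + (z 1 - N 1) ^ 2 ≤ R ^ 2 :=
    dist_sq_eq_fin_two z N ▸ pow_le_pow_left₀ dist_nonneg hz 2
  have sq_lt {z : ℝ²} (hz : R < dist z N) : R ^ 2 < (z 0 - N 0) ^ 2 + (z 1 - N 1) ^ 2 :=
    dist_sq_eq_fin_two z N ▸ pow_lt_pow_left₀ hz hR0 two_ne_zero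
  have hg : dist g N ≤ R := (convex_closedBall N R).segment_subset hy he hg₂
  have hg0 : |g 0| ≤ d / 2 := by
    simpa [segment_eq_Icc (by linarith : -(d / 2) ≤ d / 2), abs_le] using apply_mem_segment hg₁ 0
  have hg1 : g 1 = 0 := by simpa using apply_mem_segment hg₁ 1
  have hye : y 1 * e 1 ≤ 0 := mul_nonpos_of_zero_mem_segment (hg1 ▸ apply_mem_segment hg₂ 1)
  have hgN : (g 0 - N 0) ^ 2 + N 1 ^ 2 ≤ R ^ 2 := by simpa [hg1] using sq_le hg
  have hc2 : √(R ^ 2 - N 1 ^ 2) ^ 2 = R ^ 2 - N 1 ^ 2 :=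
    Real.sq_sqrt (by nlinarith [sq_nonneg (g 0 - N 0)])
  have hchord := abs_add_lt_of_chord (Real.sqrt_nonneg _) hc2 hgN hg0
    (by simpa using sq_lt hf₁) (by simpa using sq_lt hf₂)
  have hq := le_two_mul_abs_of_chord hs hs0.le (by positivity) hR <| by
    rw [← hc2]; exact pow_le_pow_left₀ (Real.sqrt_nonneg _) (by linarith [abs_nonneg (N 0)]) 2
  have hcap {a b : ℝ} :=
    abs_le_of_mem_cap (a := a) (b := b) hd hs0.le hq (Real.sqrt_nonneg _) hc2 hchord
  rcases le_or_gt (y 1 * N 1) 0 with hyN | hyN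
  · exact exists_apex_mem_convexHull hd hs0 (hcap (sq_le hy) hyN).2
  · have heN : e 1 * N 1 ≤ 0 := by nlinarith [sq_nonneg (y 1)]
    obtain ⟨he0, he1⟩ := hcap (sq_le he) heN
    have sq_lt_apex {h : ℝ} (hh : |h| = s * d / 2) :
        (β * d / 2) ^ 2 < e 0 ^ 2 + (e 1 - h) ^ 2 := by
      simpa [dist_sq_eq_fin_two] using pow_lt_pow_left₀ (he_out h hh) (by positivity) two_ne_zero
    have := lt_abs_of_lt_sq_add_sq hs he0 (sq_lt_apex (abs_of_pos (by positivity)))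
      (by simpa using sq_lt_apex (h := -(s * d / 2)) (by rw [abs_neg, abs_of_pos (by positivity)]))
    nlinarith [abs_nonneg (e 0), mul_pos hs0 hd]

open scoped EuclideanSpace in
theorem exists_affineIsometryEquiv_to_axis (f₁ f₂ : ℝ²) :
    ∃ Φ : ℝ² ≃ᵃⁱ[ℝ] ℝ², Φ f₁ = !₂[-(dist f₁ f₂ / 2), 0] ∧ Φ f₂ = !₂[dist f₁ f₂ / 2, 0] := by
  let o : Orientation ℝ ℝ² (Fin 2) := (EuclideanSpace.basisFun (Fin 2) ℝ).toBasis.orientation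
  let ρ := o.rotation (o.oangle (f₂ - f₁) !₂[dist f₁ f₂, 0])
  have hρ : ρ (f₂ - f₁) = !₂[dist f₁ f₂, 0] := by
    rw [o.rotation_oangle_eq_iff_norm_eq, ← dist_eq_norm', EuclideanSpace.norm_eq]
    simp [Fin.sum_univ_two]
  have hsum : !₂[dist f₁ f₂, 0] + !₂[-(dist f₁ f₂ / 2), 0] = (!₂[dist f₁ f₂ / 2, 0] : ℝ²) := by
    rw [← WithLp.toLp_add, Matrix.cons_add_cons, Matrix.cons_add_cons, Matrix.empty_add_empty,
      add_zero]
    congr 2; ring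
  exact ⟨(AffineIsometryEquiv.vaddConst ℝ f₁).symm.trans
    (ρ.toAffineIsometryEquiv.trans (AffineIsometryEquiv.vaddConst ℝ !₂[-(dist f₁ f₂ / 2), 0])),
    by simp, by simp [hρ, hsum]⟩

theorem exists_mem_convexHull_of_crossing {β s R : ℝ} {f₁ f₂ N e y g : ℝ²}
    (hs : s ^ 2 = β ^ 2 - 1) (hs0 : 0 < s) (hβ : 0 ≤ β) (hf : f₁ ≠ f₂)
    (hR : β * dist f₁ f₂ ≤ 2 * s * R) (hy : dist y N ≤ R) (he : dist e N ≤ R)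
    (hf₁ : R < dist f₁ N) (hf₂ : R < dist f₂ N)
    (he_out : ∀ M, dist M f₁ = β * dist f₁ f₂ / 2 → dist M f₂ = β * dist f₁ f₂ / 2 →
      β * dist f₁ f₂ / 2 < dist e M)
    (hg₁ : g ∈ segment ℝ f₁ f₂) (hg₂ : g ∈ segment ℝ y e) :
    ∃ M, dist M f₁ = β * dist f₁ f₂ / 2 ∧ dist M f₂ = β * dist f₁ f₂ / 2 ∧
      y ∈ convexHull ℝ {M, f₁, f₂} := by
  obtain ⟨Φ, hΦ₁, hΦ₂⟩ := exists_affineIsometryEquiv_to_axis f₁ f₂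
  set d := dist f₁ f₂
  have hd : 0 < d := dist_pos.2 hf
  have dist_symm_apply (z w : ℝ²) : dist (Φ.symm z) w = dist z (Φ w) := by
    rw [← Φ.dist_map, Φ.apply_symm_apply]
  have hapex {h : ℝ} (hh : |h| = s * d / 2) :
      dist (Φ.symm !₂[0, h]) f₁ = β * d / 2 ∧ dist (Φ.symm !₂[0, h]) f₂ = β * d / 2 := by
    rw [dist_symm_apply, dist_symm_apply, hΦ₁, hΦ₂]
    exact ⟨dist_apex_base hs (by positivity) hh (by rw [abs_neg, abs_of_pos (half_pos hd)]),
      dist_apex_base hs (by positivity) hh (abs_of_pos (half_pos hd))⟩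
  have hseg {a b c : ℝ²} (h : a ∈ segment ℝ b c) : Φ a ∈ segment ℝ (Φ b) (Φ c) :=
    mem_segment_iff_wbtw.2 ((mem_segment_iff_wbtw.1 h).map Φ.toAffineEquiv.toAffineMap)
  obtain ⟨h, hh, hyΦ⟩ := exists_mem_convexHull_of_crossing_axis hs hs0 hβ hd hR
    (N := Φ N) (e := Φ e) (y := Φ y) (g := Φ g) (by rwa [Φ.dist_map]) (by rwa [Φ.dist_map])
    (by rwa [← hΦ₁, Φ.dist_map]) (by rwa [← hΦ₂, Φ.dist_map])
    (fun h hh => by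
      have := he_out _ (hapex hh).1 (hapex hh).2
      rwa [dist_comm, dist_symm_apply, dist_comm] at this)
    (hΦ₁ ▸ hΦ₂ ▸ hseg hg₁) (hseg hg₂)
  refine ⟨Φ.symm !₂[0, h], (hapex hh).1, (hapex hh).2, ?_⟩
  rw [← hΦ₁, ← hΦ₂] at hyΦ
  have hhull := Φ.symm.toAffineEquiv.toAffineMap.image_convexHull {!₂[0, h], Φ f₁, Φ f₂}
  simp only [image_insert_eq, image_singleton, AffineEquiv.coe_toAffineMap,
    AffineIsometryEquiv.coe_toAffineEquiv, AffineIsometryEquiv.symm_apply_apply] at hhull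
  rw [← hhull]
  exact ⟨Φ y, hyΦ, Φ.symm_apply_apply y⟩

theorem IsSkelEdge.lt_dist {β : ℝ} {φ : Set ℝ²} {x y z M : ℝ²} (hxy : IsSkelEdge β φ x y)
    (hz : z ∈ φ) (hzx : z ≠ x) (hzy : z ≠ y) (hMx : dist M x = β * dist x y / 2)
    (hMy : dist M y = β * dist x y / 2) : β * dist x y / 2 < dist z M := by
  by_contra! hzM
  have := hxy.2.2.2 ⟨⟨M, hMx, hMy, hzM⟩, hz⟩
  simp_all

theorem stmt2_general (β : ℝ) (hβ : 1 < β) (e₁ e₂ f₁ f₂ : EuclideanSpace ℝ (Fin 2))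
    (h13 : e₁ ≠ f₁) (h14 : e₁ ≠ f₂)
    (h23 : e₂ ≠ f₁) (h24 : e₂ ≠ f₂) (h34 : f₁ ≠ f₂)
    (he : IsSkelEdge β {e₁, e₂, f₁, f₂} e₁ e₂)
    (hf : IsSkelEdge β {e₁, e₂, f₁, f₂} f₁ f₂)
    (hlen : dist f₁ f₂ ≤ Real.tan (Real.arccos (1 / β)) * dist e₁ e₂)
    (y : EuclideanSpace ℝ (Fin 2)) (hy : y ∈ Cbeta β e₁ e₂)
    (hcross₁ : (segment ℝ f₁ f₂ ∩ segment ℝ y e₁).Nonempty) :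
    ∃ M : EuclideanSpace ℝ (Fin 2),
      dist M f₁ = β * dist f₁ f₂ / 2 ∧ dist M f₂ = β * dist f₁ f₂ / 2 ∧
      y ∈ convexHull ℝ {M, f₁, f₂} := by
  obtain ⟨N, hN₁, hN₂, hyN⟩ := hy
  obtain ⟨g, hg₁, hg₂⟩ := hcross₁
  have hβ0 : 0 < β := by linarith
  have hs : 0 < β ^ 2 - 1 := by nlinarith
  rw [one_div, Real.tan_arccos_inv hβ0] at hlen
  refine exists_mem_convexHull_of_crossing (Real.sq_sqrt hs.le) (Real.sqrt_pos.2 hs) hβ0.le h34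
    ?_ hyN (by rw [dist_comm, hN₁]) (he.lt_dist (by simp) h13.symm h23.symm hN₁ hN₂)
    (he.lt_dist (by simp) h14.symm h24.symm hN₁ hN₂)
    (fun M hM₁ hM₂ => hf.lt_dist (by simp) h13 h14 hM₁ hM₂) hg₁ hg₂
  calc β * dist f₁ f₂ ≤ β * (√(β ^ 2 - 1) * dist e₁ e₂) := mul_le_mul_of_nonneg_left hlen hβ0.le
    _ = 2 * √(β ^ 2 - 1) * (β * dist e₁ e₂ / 2) := by ring

theorem stmt2 (β : ℝ) (hβ : 1 < β) (e₁ e₂ f₁ f₂ : EuclideanSpace ℝ (Fin 2))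
    (h12 : e₁ ≠ e₂) (h13 : e₁ ≠ f₁) (h14 : e₁ ≠ f₂)
    (h23 : e₂ ≠ f₁) (h24 : e₂ ≠ f₂) (h34 : f₁ ≠ f₂)
    (he : IsSkelEdge β {e₁, e₂, f₁, f₂} e₁ e₂)
    (hf : IsSkelEdge β {e₁, e₂, f₁, f₂} f₁ f₂)
    (hlen : dist f₁ f₂ ≤ Real.tan (Real.arccos (1 / β)) * dist e₁ e₂)
    (y : EuclideanSpace ℝ (Fin 2)) (hy : y ∈ Cbeta β e₁ e₂)
    (hcross₁ : (segment ℝ f₁ f₂ ∩ segment ℝ y e₁).Nonempty)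
    (hcross₂ : (segment ℝ f₁ f₂ ∩ segment ℝ y e₂).Nonempty) :
    ∃ M : EuclideanSpace ℝ (Fin 2),
      dist M f₁ = β * dist f₁ f₂ / 2 ∧ dist M f₂ = β * dist f₁ f₂ / 2 ∧
      y ∈ convexHull ℝ {M, f₁, f₂} :=
  stmt2_general β hβ e₁ e₂ f₁ f₂ h13 h14 h23 h24 h34 he hf hlen y hy hcross₁
end

section
/- Let β > 1, set γ := arcsin(1/β), and let 0 < θ₀ < π − 2γ. If x, y ∈ ℝ² \ {0} are distinct points with dist(0,x) ≤ dist(0,y) and the angle ∠x0y at the origin between x and y is at most θ₀, then the angle ∠0xy at x exceeds γ; in particular x ∈ C_β(0,y), and hence {0,y} is not an edge of the β-skeleton of any locally finite set φ ⊆ ℝ² containing 0, x, and y. -/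
open Metric Set

/-!
Write `γ = arcsin (1/β)`. Since `‖x‖ ≤ ‖y‖`, the angle of the triangle `0 x y` at `x` is at least
its angle at `y`; as the three angles add up to `π`, twice the angle at `x` is at least
`π - ∠x0y > 2γ`.

By the inscribed angle theorem, the two disks of radius `β d / 2` through `p` and `q`
(`d = dist p q`) contain every point `z` with `∠pzq ≥ γ`. Algebraically, with `a = z - p`,
`b = z - q` and `k = √(β² - 1) = cot γ`, the point `z` lies in the disk centred at
`(p + q)/2 ± (k/2) J(q - p)` iff `⟪a, b⟫ ≤ ± k ω(a, b)`, where `J` is the rotation by `π/2` and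
`ω` the area form; and `⟪a, b⟫ ≤ k |ω(a, b)|` says `cos ∠pzq ≤ cot γ · sin ∠pzq`.
-/

open EuclideanGeometry Real
open scoped RealInnerProductSpace

section Triangle

variable {V P : Type*} [NormedAddCommGroup V] [InnerProductSpace ℝ V] [MetricSpace P]
  [NormedAddTorsor V P]

theorem EuclideanGeometry.angle_le_angle_of_dist_le {a b c : P} (h : dist a b ≤ dist a c) :
    ∠ a c b ≤ ∠ a b c := by
  by_cases hcol : Collinear ℝ ({a, b, c} : Set P)
  · rw [Set.pair_comm b c, collinear_iff_eq_or_eq_or_angle_eq_zero_or_angle_eq_pi] at hcol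
    rcases hcol with rfl | rfl | h0 | hpi
    · obtain rfl : a = b := dist_le_zero.mp (by simpa using h)
      exact le_rfl
    · exact le_rfl
    · exact h0 ▸ angle_nonneg a b c
    · obtain rfl : b = c := by
        have := dist_eq_add_dist_of_angle_eq_pi hpi
        exact dist_le_zero.mp (by linarith)
      exact le_rfl
  · exact (angle_le_iff_dist_le hcol).mpr h

theorem EuclideanGeometry.pi_sub_angle_le_two_mul_angle {a b c : P} (hba : b ≠ a)
    (h : dist a b ≤ dist a c) : π - ∠ b a c ≤ 2 * ∠ a b c := by
  have hsum := angle_add_angle_add_angle_eq_pi c hba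
  rw [angle_comm b c a, angle_comm c a b] at hsum
  linarith [angle_le_angle_of_dist_le h]

end Triangle

theorem Real.cos_le_mul_sin_of_arcsin_inv_le {β θ : ℝ} (hβ : 1 ≤ β)
    (hθ : arcsin (1 / β) ≤ θ) (hθπ : θ ≤ π) :
    cos θ ≤ β * cos (arcsin (1 / β)) * sin θ := by
  have hβ0 : 0 < β := by linarith
  have hinv : 0 < 1 / β := one_div_pos.mpr hβ0
  have hsin : sin (arcsin (1 / β)) = 1 / β :=
    sin_arcsin (by linarith) ((div_le_one hβ0).mpr hβ)
  have hnonneg : 0 ≤ β * sin (θ - arcsin (1 / β)) :=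
    mul_nonneg hβ0.le <| sin_nonneg_of_nonneg_of_le_pi (by linarith)
      (by linarith [arcsin_nonneg.mpr hinv.le])
  rw [sin_sub, hsin] at hnonneg
  field_simp at hnonneg
  linarith

theorem Real.sq_mul_cos_arcsin_inv {β : ℝ} (hβ : 1 ≤ β) :
    (β * cos (arcsin (1 / β))) ^ 2 = β ^ 2 - 1 := by
  have hβ0 : β ≠ 0 := by positivity
  rw [cos_arcsin, mul_pow, sq_sqrt (by
    rw [sub_nonneg, div_pow, one_pow, div_le_one (by positivity)]; nlinarith)]
  field_simp

section Plane

variable {E : Type*} [NormedAddCommGroup E] [InnerProductSpace ℝ E]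
  [Fact (Module.finrank ℝ E = 2)] (o : Orientation ℝ E (Fin 2))

theorem Orientation.abs_areaForm_eq_sin_angle_mul (a b : E) :
    |o.areaForm a b| = sin (InnerProductGeometry.angle a b) * (‖a‖ * ‖b‖) := by
  rw [InnerProductGeometry.sin_angle_mul_norm_mul_norm, real_inner_self_eq_norm_sq,
    real_inner_self_eq_norm_sq, ← o.inner_sq_add_areaForm_sq, ← sqrt_sq_eq_abs]
  ring_nf

theorem Orientation.inner_le_mul_abs_areaForm_of_arcsin_inv_le_angle {β : ℝ} (hβ : 1 ≤ β)
    {a b : E} (h : arcsin (1 / β) ≤ InnerProductGeometry.angle a b) :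
    ⟪a, b⟫ ≤ β * cos (arcsin (1 / β)) * |o.areaForm a b| := by
  rw [← InnerProductGeometry.cos_angle_mul_norm_mul_norm, o.abs_areaForm_eq_sin_angle_mul,
    ← mul_assoc (β * _)]
  exact mul_le_mul_of_nonneg_right
    (cos_le_mul_sin_of_arcsin_inv_le hβ h (InnerProductGeometry.angle_le_pi a b)) (by positivity)

end Plane

theorem norm_smul_add_smul_sq {E : Type*} [NormedAddCommGroup E] [InnerProductSpace ℝ E]
    {v w : E} (hvw : ⟪v, w⟫ = 0) (hw : ‖w‖ = ‖v‖) (s t : ℝ) :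
    ‖s • v + t • w‖ ^ 2 = (s ^ 2 + t ^ 2) * ‖v‖ ^ 2 := by
  have horth : ⟪s • v, t • w⟫ = 0 := by
    rw [real_inner_smul_left, real_inner_smul_right, hvw, mul_zero, mul_zero]
  rw [sq, norm_add_sq_eq_norm_sq_add_norm_sq_real horth, norm_smul, norm_smul, hw,
    Real.norm_eq_abs, Real.norm_eq_abs]
  nlinarith [sq_abs s, sq_abs t]

theorem mem_Cbeta_of_inner_le_s7 {β k : ℝ} (hβ : 0 ≤ β) (hk : k ^ 2 = β ^ 2 - 1)
    {p q z w : EuclideanSpace ℝ (Fin 2)} (hvw : ⟪q - p, w⟫ = 0) (hw : ‖w‖ = ‖q - p‖)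
    (h : ⟪z - p, z - q⟫ ≤ k * ⟪z - p, w⟫) : z ∈ Cbeta β p q := by
  set v := q - p
  set R := β * dist p q / 2
  have hR : 0 ≤ R := by positivity
  have hRv : R = β * ‖v‖ / 2 := by simp only [R, v, dist_comm p q, dist_eq_norm]
  have hRsq (s : ℝ) (hs : s ^ 2 = 1) : ‖(s / 2) • v + (k / 2) • w‖ ^ 2 = R ^ 2 := by
    rw [norm_smul_add_smul_sq hvw hw, hRv]
    linear_combination (‖v‖ ^ 2 / 4) * (hs + hk)
  set M := p + ((1 : ℝ) / 2) • v + (k / 2) • w with hM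
  refine ⟨M, ?_, ?_, ?_⟩
  · rw [dist_eq_norm, ← pow_left_inj₀ (norm_nonneg _) hR two_ne_zero, ← hRsq 1 (one_pow 2), hM]
    congr 2
    abel
  · rw [dist_eq_norm, ← pow_left_inj₀ (norm_nonneg _) hR two_ne_zero, ← hRsq (-1) (by norm_num),
      hM]
    congr 2
    simp only [v]
    module
  · rw [dist_eq_norm, ← pow_le_pow_iff_left₀ (norm_nonneg _) hR two_ne_zero, ← hRsq 1 (one_pow 2)]
    have hz : z - M = (z - p) - ((1 / 2 : ℝ) • v + (k / 2) • w) := by rw [hM]; abel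
    have hzq : z - q = (z - p) - v := by simp only [v]; abel
    rw [hz, norm_sub_sq_real, inner_add_right, real_inner_smul_right, real_inner_smul_right]
    rw [hzq, inner_sub_right, real_inner_self_eq_norm_sq] at h
    linarith

open scoped EuclideanSpace in
theorem mem_Cbeta_of_arcsin_inv_le_angle {β : ℝ} (hβ : 1 ≤ β)
    {p q z : EuclideanSpace ℝ (Fin 2)} (h : arcsin (1 / β) ≤ ∠ p z q) : z ∈ Cbeta β p q := by
  let o : Orientation ℝ (EuclideanSpace ℝ (Fin 2)) (Fin 2) :=
    (EuclideanSpace.basisFun (Fin 2) ℝ).toBasis.orientation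
  set J := o.rightAngleRotation
  have hk := sq_mul_cos_arcsin_inv hβ
  have hangle : ∠ p z q = InnerProductGeometry.angle (z - p) (z - q) := by
    rw [EuclideanGeometry.angle, ← InnerProductGeometry.angle_neg_neg, vsub_eq_sub, vsub_eq_sub,
      neg_sub, neg_sub]
  have harea : o.areaForm (z - p) (z - q) = ⟪z - p, J (q - p)⟫ := by
    rw [o.inner_rightAngleRotation_right, ← sub_sub_sub_cancel_right z q p, map_sub,
      o.areaForm_apply_self, zero_sub]
  have key := o.inner_le_mul_abs_areaForm_of_arcsin_inv_le_angle hβ (hangle ▸ h)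
  rw [harea] at key
  have hperp : ⟪q - p, J (q - p)⟫ = 0 := by
    rw [o.inner_rightAngleRotation_right, o.areaForm_apply_self, neg_zero]
  rcases abs_cases ⟪z - p, J (q - p)⟫ with ⟨habs, -⟩ | ⟨habs, -⟩
  · exact mem_Cbeta_of_inner_le_s7 (by linarith) hk hperp (J.norm_map _) (habs ▸ key)
  · refine mem_Cbeta_of_inner_le_s7 (w := -J (q - p)) (by linarith) hk ?_ ?_ ?_
    · rw [inner_neg_right, hperp, neg_zero]
    · rw [norm_neg, J.norm_map]
    · rwa [inner_neg_right, ← habs]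

theorem not_isSkelEdge_of_mem_Cbeta {β : ℝ} {φ : Set (EuclideanSpace ℝ (Fin 2))}
    {p q z : EuclideanSpace ℝ (Fin 2)} (hz : z ∈ Cbeta β p q) (hzφ : z ∈ φ) (hzp : z ≠ p)
    (hzq : z ≠ q) : ¬ IsSkelEdge β φ p q := fun hedge =>
  (hedge.2.2.2 ⟨hz, hzφ⟩).elim hzp hzq

theorem stmt7_general (β : ℝ) (hβ : 1 < β) (θ₀ : ℝ)
    (hθ₁ : θ₀ < Real.pi - 2 * Real.arcsin (1 / β))
    (x y : EuclideanSpace ℝ (Fin 2)) (hx : x ≠ 0) (hxy : x ≠ y)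
    (hle : dist (0 : EuclideanSpace ℝ (Fin 2)) x ≤ dist (0 : EuclideanSpace ℝ (Fin 2)) y)
    (hang : EuclideanGeometry.angle x (0 : EuclideanSpace ℝ (Fin 2)) y ≤ θ₀) :
    Real.arcsin (1 / β) < EuclideanGeometry.angle (0 : EuclideanSpace ℝ (Fin 2)) x y ∧
    x ∈ Cbeta β 0 y ∧
    ∀ φ : Set (EuclideanSpace ℝ (Fin 2)), (∀ r : ℝ, (φ ∩ closedBall 0 r).Finite) →
      (0 : EuclideanSpace ℝ (Fin 2)) ∈ φ → x ∈ φ → y ∈ φ → ¬ IsSkelEdge β φ 0 y := by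
  have hγ : arcsin (1 / β) < ∠ 0 x y := by
    linarith [pi_sub_angle_le_two_mul_angle hx hle]
  have hmem : x ∈ Cbeta β 0 y := mem_Cbeta_of_arcsin_inv_le_angle hβ.le hγ.le
  exact ⟨hγ, hmem, fun φ _ _ hxφ _ => not_isSkelEdge_of_mem_Cbeta hmem hxφ hx hxy⟩

theorem stmt7 (β : ℝ) (hβ : 1 < β) (θ₀ : ℝ) (hθ₀ : 0 < θ₀)
    (hθ₁ : θ₀ < Real.pi - 2 * Real.arcsin (1 / β))
    (x y : EuclideanSpace ℝ (Fin 2)) (hx : x ≠ 0) (hy : y ≠ 0) (hxy : x ≠ y)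
    (hle : dist (0 : EuclideanSpace ℝ (Fin 2)) x ≤ dist (0 : EuclideanSpace ℝ (Fin 2)) y)
    (hang : EuclideanGeometry.angle x (0 : EuclideanSpace ℝ (Fin 2)) y ≤ θ₀) :
    Real.arcsin (1 / β) < EuclideanGeometry.angle (0 : EuclideanSpace ℝ (Fin 2)) x y ∧
    x ∈ Cbeta β 0 y ∧
    ∀ φ : Set (EuclideanSpace ℝ (Fin 2)), (∀ r : ℝ, (φ ∩ closedBall 0 r).Finite) →
      (0 : EuclideanSpace ℝ (Fin 2)) ∈ φ → x ∈ φ → y ∈ φ → ¬ IsSkelEdge β φ 0 y :=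
  stmt7_general β hβ θ₀ hθ₁ x y hx hxy hle hang
end

section
/- Let d ≥ 1 and k ≥ 1, let φ ⊆ ℝ^d be locally finite, and let M > 0. Then the number of points x ∈ φ ∩ B_M(0) with D_k(x,φ) > M is at most k·4^d. -/
open Metric Set ENNReal
open MeasureTheory

/-- The distance from `x` to its `k`-th nearest neighbor in `φ \ {x}`,
i.e. `inf {r > 0 : #((φ \ {x}) ∩ B_r(x)) ≥ k}`, with `inf ∅ = ∞`. -/
noncomputable def Dk (d k : ℕ) (φ : Set (EuclideanSpace ℝ (Fin d)))
    (x : EuclideanSpace ℝ (Fin d)) : ℝ≥0∞ :=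
  ⨅ (r : ℝ) (_ : 0 < r) (_ : k ≤ ((φ \ {x}) ∩ closedBall x r).ncard), ENNReal.ofReal r

theorem stmt8 (d k : ℕ) (hd : 1 ≤ d) (hk : 1 ≤ k)
    (φ : Set (EuclideanSpace ℝ (Fin d)))
    (hφ : ∀ r : ℝ, (φ ∩ closedBall 0 r).Finite)
    (M : ℝ) (hM : 0 < M) :
    {x | x ∈ φ ∩ closedBall 0 M ∧ ENNReal.ofReal M < Dk d k φ x}.Finite ∧
    {x | x ∈ φ ∩ closedBall 0 M ∧ ENNReal.ofReal M < Dk d k φ x}.ncard ≤ k * 4 ^ d := by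
  classical
  set S := {x | x ∈ φ ∩ closedBall 0 M ∧ ENNReal.ofReal M < Dk d k φ x} with hSdef
  have hSsub : S ⊆ φ ∩ closedBall 0 M := fun x hx => hx.1
  have hSfin : S.Finite := (hφ M).subset hSsub
  refine ⟨hSfin, ?_⟩
  have key : ∀ x ∈ S, ((φ \ {x}) ∩ closedBall x M).ncard < k := by
    intro x hx
    by_contra h
    push_neg at h
    have hle : Dk d k φ x ≤ ENNReal.ofReal M := by
      refine iInf_le_of_le M (iInf_le_of_le hM (iInf_le_of_le h le_rfl))
    exact absurd (hx.2.trans_le hle) (lt_irrefl _)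
  set F := hSfin.toFinset with hF
  -- multiplicity bound
  have hmul : ∀ a : EuclideanSpace ℝ (Fin d),
      (F.filter (fun x => a ∈ closedBall x (M / 2))).card ≤ k := by
    intro a
    by_contra h
    push_neg at h
    obtain ⟨x, hxG⟩ : (F.filter (fun x => a ∈ closedBall x (M / 2))).Nonempty :=
      Finset.card_pos.mp (by omega)
    have hxS : x ∈ S := hSfin.mem_toFinset.mp (Finset.mem_filter.mp hxG).1
    have hxa : dist a x ≤ M / 2 := mem_closedBall.mp (Finset.mem_filter.mp hxG).2
    have hsub : ((F.filter (fun x => a ∈ closedBall x (M / 2))).erase x : Finset _) →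
        True := fun _ => trivial
    have hsub' : ↑((F.filter (fun x => a ∈ closedBall x (M / 2))).erase x) ⊆
        (φ \ {x}) ∩ closedBall x M := by
      intro y hy
      simp only [Finset.coe_erase, Set.mem_diff, Finset.mem_coe, Set.mem_singleton_iff] at hy
      obtain ⟨hyG, hyx⟩ := hy
      have hyS : y ∈ S := hSfin.mem_toFinset.mp (Finset.mem_filter.mp hyG).1
      have hya : dist a y ≤ M / 2 := mem_closedBall.mp (Finset.mem_filter.mp hyG).2
      refine ⟨⟨hyS.1.1, hyx⟩, ?_⟩
      rw [mem_closedBall]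
      calc dist y x ≤ dist y a + dist a x := dist_triangle _ _ _
        _ ≤ M / 2 + M / 2 := by rw [dist_comm]; exact add_le_add hya hxa
        _ = M := by ring
    have hfin2 : ((φ \ {x}) ∩ closedBall x M).Finite := by
      refine (hφ (2 * M)).subset ?_
      intro y hy
      refine ⟨hy.1.1, ?_⟩
      have hyx : dist y x ≤ M := mem_closedBall.mp hy.2
      rw [mem_closedBall]
      have hx0 : dist x (0 : EuclideanSpace ℝ (Fin d)) ≤ M := mem_closedBall.mp hxS.1.2
      calc dist y 0 ≤ dist y x + dist x 0 := dist_triangle _ _ _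
        _ ≤ M + M := add_le_add hyx hx0
        _ = 2 * M := by ring
    have hcard : k ≤ ((φ \ {x}) ∩ closedBall x M).ncard := by
      have h1 := Set.ncard_le_ncard hsub' hfin2
      rw [Set.ncard_coe_finset, Finset.card_erase_of_mem hxG] at h1
      omega
    exact absurd (key x hxS) (not_lt.mpr hcard)
  -- measure argument
  set μ := (volume : Measure (EuclideanSpace ℝ (Fin d)))
  set c := μ (ball 0 1) with hc
  have hrank : Module.finrank ℝ (EuclideanSpace ℝ (Fin d)) = d := finrank_euclideanSpace_fin
  have hball : ∀ x : EuclideanSpace ℝ (Fin d),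
      μ (closedBall x (M / 2)) = ENNReal.ofReal ((M / 2) ^ d) * c := by
    intro x
    rw [Measure.addHaar_closedBall μ x (by positivity : (0:ℝ) ≤ M / 2), hrank]
  have hbig : μ (closedBall (0 : EuclideanSpace ℝ (Fin d)) (M + M / 2))
      = ENNReal.ofReal ((M + M / 2) ^ d) * c := by
    rw [Measure.addHaar_closedBall μ _ (by positivity : (0:ℝ) ≤ M + M / 2), hrank]
  -- sum of measures = lintegral of sum of indicators
  have hsum : ∑ x ∈ F, μ (closedBall x (M / 2))
      = ∫⁻ a, ∑ x ∈ F, (closedBall x (M / 2)).indicator (fun _ => (1 : ℝ≥0∞)) a ∂μ := by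
    rw [lintegral_finset_sum]
    · refine Finset.sum_congr rfl fun x _ => ?_
      rw [lintegral_indicator measurableSet_closedBall _]
      simp
    · intro x _
      exact (measurable_const).indicator measurableSet_closedBall
  have hpt : ∀ a, ∑ x ∈ F, (closedBall x (M / 2)).indicator (fun _ => (1 : ℝ≥0∞)) a
      ≤ (closedBall (0 : EuclideanSpace ℝ (Fin d)) (M + M / 2)).indicator
          (fun _ => (k : ℝ≥0∞)) a := by
    intro a
    have hsum' : ∑ x ∈ F, (closedBall x (M / 2)).indicator (fun _ => (1 : ℝ≥0∞)) a
        = ((F.filter (fun x => a ∈ closedBall x (M / 2))).card : ℝ≥0∞) := by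
      rw [Finset.card_filter]
      push_cast
      refine Finset.sum_congr rfl fun x _ => ?_
      simp [Set.indicator_apply]
    rw [hsum']
    by_cases ha : a ∈ closedBall (0 : EuclideanSpace ℝ (Fin d)) (M + M / 2)
    · rw [Set.indicator_of_mem ha]
      exact_mod_cast Nat.cast_le.mpr (hmul a)
    · rw [Set.indicator_of_notMem ha]
      have : (F.filter (fun x => a ∈ closedBall x (M / 2))) = ∅ := by
        rw [Finset.filter_eq_empty_iff]
        intro x hxF hax
        apply ha
        have hxS : x ∈ S := hSfin.mem_toFinset.mp hxF
        have hx0 : dist x (0 : EuclideanSpace ℝ (Fin d)) ≤ M := mem_closedBall.mp hxS.1.2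
        rw [mem_closedBall]
        calc dist a 0 ≤ dist a x + dist x 0 := dist_triangle _ _ _
          _ ≤ M / 2 + M := add_le_add (mem_closedBall.mp hax) hx0
          _ = M + M / 2 := by ring
      simp only [mem_closedBall] at this
      simp [this]
  have hineq : ∑ x ∈ F, μ (closedBall x (M / 2))
      ≤ (k : ℝ≥0∞) * μ (closedBall (0 : EuclideanSpace ℝ (Fin d)) (M + M / 2)) := by
    rw [hsum]
    calc ∫⁻ a, ∑ x ∈ F, (closedBall x (M / 2)).indicator (fun _ => (1 : ℝ≥0∞)) a ∂μ
        ≤ ∫⁻ a, (closedBall (0 : EuclideanSpace ℝ (Fin d)) (M + M / 2)).indicator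
            (fun _ => (k : ℝ≥0∞)) a ∂μ := lintegral_mono hpt
      _ = (k : ℝ≥0∞) * μ (closedBall (0 : EuclideanSpace ℝ (Fin d)) (M + M / 2)) := by
          rw [lintegral_indicator measurableSet_closedBall _]
          simp [mul_comm]
  rw [Finset.sum_congr rfl (fun x _ => hball x), Finset.sum_const, nsmul_eq_mul, hbig] at hineq
  have hpow : ENNReal.ofReal ((M + M / 2) ^ d) = ENNReal.ofReal (3 ^ d) * ENNReal.ofReal ((M / 2) ^ d) := by
    rw [← ENNReal.ofReal_mul (by positivity)]
    congr 1
    rw [← mul_pow]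
    ring_nf
  rw [hpow] at hineq
  have hc0 : c ≠ 0 := (measure_ball_pos μ 0 one_pos).ne'
  have hct : c ≠ ⊤ := measure_ball_lt_top.ne
  have ha0 : ENNReal.ofReal ((M / 2) ^ d) ≠ 0 := by
    simp only [ne_eq, ENNReal.ofReal_eq_zero, not_le]
    positivity
  have hat : ENNReal.ofReal ((M / 2) ^ d) ≠ ⊤ := ENNReal.ofReal_ne_top
  have hcard : (F.card : ℝ≥0∞) ≤ (k : ℝ≥0∞) * ENNReal.ofReal (3 ^ d) := by
    have h2 : (F.card : ℝ≥0∞) * (ENNReal.ofReal ((M / 2) ^ d) * c)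
        ≤ ((k : ℝ≥0∞) * ENNReal.ofReal (3 ^ d)) * (ENNReal.ofReal ((M / 2) ^ d) * c) := by
      calc (F.card : ℝ≥0∞) * (ENNReal.ofReal ((M / 2) ^ d) * c)
          ≤ (k : ℝ≥0∞) * (ENNReal.ofReal (3 ^ d) * ENNReal.ofReal ((M / 2) ^ d) * c) := hineq
        _ = ((k : ℝ≥0∞) * ENNReal.ofReal (3 ^ d)) * (ENNReal.ofReal ((M / 2) ^ d) * c) := by
            ring
    exact (ENNReal.mul_le_mul_iff_left (mul_ne_zero ha0 hc0)
      (ENNReal.mul_ne_top hat hct)).mp h2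
  have h3 : ENNReal.ofReal ((3:ℝ) ^ d) = ((3 ^ d : ℕ) : ℝ≥0∞) := by
    rw [← ENNReal.ofReal_natCast]
    push_cast
    rfl
  rw [h3, ← Nat.cast_mul] at hcard
  have hFc : F.card ≤ k * 3 ^ d := Nat.cast_le.mp hcard
  have : S.ncard = F.card := Set.ncard_eq_toFinset_card S hSfin
  rw [this]
  calc F.card ≤ k * 3 ^ d := hFc
    _ ≤ k * 4 ^ d := Nat.mul_le_mul_left k (Nat.pow_le_pow_left (by norm_num) d)
end

section
/- Let d ≥ 1 and k ≥ 1, and let φ ⊆ ℝ^d be a finite set such that all distances between distinct pairs of points of φ are pairwise distinct, i.e., if w, x, y, z ∈ φ satisfy dist(w,x) = dist(y,z) > 0 then {w,x} = {y,z}. Then there exists δ > 0 such that for every family of vectors (z_w)_{w∈φ} with ‖z_w‖ ≤ δ for all w, and all distinct x, y ∈ φ: y is a k-nearest neighbor of x in φ if and only if y + z_y is a k-nearest neighbor of x + z_x in the set {w + z_w : w ∈ φ}. -/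
open Metric Set

/-- `y` is a `k`-nearest neighbor of `x` in `ψ`: `y ∈ ψ \ {x}` and fewer than `k` points
of `ψ \ {x}` are strictly closer to `x` than `y` is. -/
def IsKNN (d k : ℕ) (ψ : Set (EuclideanSpace ℝ (Fin d)))
    (x y : EuclideanSpace ℝ (Fin d)) : Prop :=
  y ∈ ψ ∧ y ≠ x ∧ {w | w ∈ ψ ∧ w ≠ x ∧ dist w x < dist y x}.ncard < k

lemma exists_pos_lt_aux (S : Set ℝ) (hS : S.Finite) : ∃ δ > 0, ∀ t ∈ S, 0 < t → δ < t := by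
  classical
  set F := hS.toFinset.filter (fun t => 0 < t) with hF
  rcases F.eq_empty_or_nonempty with h | h
  · refine ⟨1, one_pos, fun t ht htpos => absurd ?_ (by simp [h] : t ∉ F)⟩
    exact Finset.mem_filter.mpr ⟨hS.mem_toFinset.mpr ht, htpos⟩
  · have h0 : 0 < F.min' h := (Finset.mem_filter.mp (F.min'_mem h)).2
    refine ⟨F.min' h / 2, by linarith, ?_⟩
    intro t ht htpos
    have h1 := F.min'_le t (Finset.mem_filter.mpr ⟨hS.mem_toFinset.mpr ht, htpos⟩)
    linarith

theorem stmt9 (d k : ℕ) (hd : 1 ≤ d) (hk : 1 ≤ k)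
    (φ : Set (EuclideanSpace ℝ (Fin d))) (hfin : φ.Finite)
    (hgen : ∀ w ∈ φ, ∀ x ∈ φ, ∀ y ∈ φ, ∀ z ∈ φ,
      dist w x = dist y z → 0 < dist w x → ({w, x} : Set (EuclideanSpace ℝ (Fin d))) = {y, z}) :
    ∃ δ : ℝ, 0 < δ ∧
      ∀ zf : EuclideanSpace ℝ (Fin d) → EuclideanSpace ℝ (Fin d),
        (∀ w ∈ φ, ‖zf w‖ ≤ δ) →
        ∀ x ∈ φ, ∀ y ∈ φ, x ≠ y →
          (IsKNN d k φ x y ↔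
            IsKNN d k ((fun w => w + zf w) '' φ) (x + zf x) (y + zf y)) := by
  classical
  set T : Set ℝ :=
    (fun p : (EuclideanSpace ℝ (Fin d) × EuclideanSpace ℝ (Fin d)) × (EuclideanSpace ℝ (Fin d) × EuclideanSpace ℝ (Fin d)) => |dist p.1.1 p.1.2 - dist p.2.1 p.2.2|) ''
      ((φ ×ˢ φ) ×ˢ (φ ×ˢ φ)) with hT
  have hTfin : T.Finite := (((hfin.prod hfin).prod (hfin.prod hfin)).image _)
  obtain ⟨δ₀, hδ₀, hsep⟩ := exists_pos_lt_aux T hTfin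
  have hmemT : ∀ a ∈ φ, ∀ b ∈ φ, ∀ c ∈ φ, ∀ e ∈ φ, |dist a b - dist c e| ∈ T := by
    intro a ha b hb c hc e he
    exact ⟨((a, b), (c, e)), ⟨⟨ha, hb⟩, ⟨hc, he⟩⟩, rfl⟩
  -- gap between unequal distances
  have hgap : ∀ a ∈ φ, ∀ b ∈ φ, ∀ c ∈ φ, ∀ e ∈ φ, dist a b ≠ dist c e →
      δ₀ < |dist a b - dist c e| := by
    intro a ha b hb c hc e he hne
    exact hsep _ (hmemT a ha b hb c hc e he) (by simpa [sub_eq_zero] using hne)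
  have hgapd : ∀ a ∈ φ, ∀ b ∈ φ, a ≠ b → δ₀ < dist a b := by
    intro a ha b hb hab
    have := hgap a ha b hb a ha a ha (by simpa using dist_ne_zero.mpr hab)
    simpa [abs_of_nonneg dist_nonneg] using this
  refine ⟨δ₀ / 4, by linarith, ?_⟩
  intro zf hzf x hx y hy hxy
  -- perturbation bound
  have hpert : ∀ a ∈ φ, ∀ b ∈ φ,
      |dist (a + zf a) (b + zf b) - dist a b| ≤ δ₀ / 2 := by
    intro a ha b hb
    have h1 : dist (a + zf a) (b + zf b) ≤ dist a b + dist (zf a) (zf b) :=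
      dist_add_add_le a (zf a) b (zf b)
    have h2 : dist a b ≤ dist (a + zf a) (b + zf b) + dist (zf a) (zf b) := by
      have := dist_add_add_le (a + zf a) (-(zf a)) (b + zf b) (-(zf b))
      simpa [dist_neg_neg, dist_comm] using this
    have h3 : dist (zf a) (zf b) ≤ δ₀ / 2 := by
      have := dist_le_norm_add_norm (zf a) (zf b)
      have ha' := hzf a ha
      have hb' := hzf b hb
      linarith
    rw [abs_le]
    constructor <;> linarith
  -- injectivity of perturbation
  have hinj : ∀ a ∈ φ, ∀ b ∈ φ, a ≠ b → a + zf a ≠ b + zf b := by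
    intro a ha b hb hab heq
    have h1 := hpert a ha b hb
    have h2 := hgapd a ha b hb hab
    rw [heq, dist_self] at h1
    rw [abs_le] at h1
    linarith
  -- strict inequality preserved
  have hlt : ∀ a ∈ φ, ∀ b ∈ φ, ∀ c ∈ φ, dist a c < dist b c →
      dist (a + zf a) (c + zf c) < dist (b + zf b) (c + zf c) := by
    intro a ha b hb c hc h
    have hg := hgap b hb c hc a ha c hc (ne_of_gt h)
    rw [abs_of_pos (by linarith)] at hg
    have h1 := hpert a ha c hc
    have h2 := hpert b hb c hc
    rw [abs_le] at h1 h2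
    linarith [h1.2, h2.1]
  -- the iff for comparisons
  have hcmp : ∀ w ∈ φ, w ≠ x → (dist w x < dist y x ↔
      dist (w + zf w) (x + zf x) < dist (y + zf y) (x + zf x)) := by
    intro w hw hwx
    constructor
    · exact hlt w hw y hy x hx
    · intro h
      rcases lt_trichotomy (dist w x) (dist y x) with h' | h' | h'
      · exact h'
      · exfalso
        have hpos : 0 < dist w x := dist_pos.mpr hwx
        have := hgen w hw x hx y hy x hx h' hpos
        have hwy : w = y := by
          have : w ∈ ({y, x} : Set (EuclideanSpace ℝ (Fin d))) := this ▸ (by simp : w ∈ ({w, x} : Set (EuclideanSpace ℝ (Fin d))))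
          rcases this with h'' | h''
          · exact h''
          · exact absurd h'' hwx
        rw [hwy] at h
        exact lt_irrefl _ h
      · exact absurd (hlt y hy w hw x hx h') (not_lt.mpr (le_of_lt h))
  -- set equality
  have hyx : y ≠ x := fun h => hxy h.symm
  have hset : {w | w ∈ (fun w => w + zf w) '' φ ∧ w ≠ x + zf x ∧
      dist w (x + zf x) < dist (y + zf y) (x + zf x)} =
      (fun w => w + zf w) '' {w | w ∈ φ ∧ w ≠ x ∧ dist w x < dist y x} := by
    ext w'
    constructor
    · rintro ⟨⟨w, hw, rfl⟩, hne, hlt'⟩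
      have hwx : w ≠ x := fun h => hne (by rw [h])
      exact ⟨w, ⟨hw, hwx, (hcmp w hw hwx).mpr hlt'⟩, rfl⟩
    · rintro ⟨w, ⟨hw, hwx, hlt'⟩, rfl⟩
      exact ⟨⟨w, hw, rfl⟩, hinj w hw x hx hwx, (hcmp w hw hwx).mp hlt'⟩
  have hcard : {w | w ∈ (fun w => w + zf w) '' φ ∧ w ≠ x + zf x ∧
      dist w (x + zf x) < dist (y + zf y) (x + zf x)}.ncard =
      {w | w ∈ φ ∧ w ≠ x ∧ dist w x < dist y x}.ncard := by
    rw [hset]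
    exact Set.ncard_image_of_injOn
      (fun a ha b hb hab => by_contra fun hne => hinj a ha.1 b hb.1 hne hab)
  constructor
  · rintro ⟨hy', hyx', hk'⟩
    exact ⟨⟨y, hy, rfl⟩, hinj y hy x hx hyx, by rw [hcard]; exact hk'⟩
  · rintro ⟨hy', hyx', hk'⟩
    exact ⟨hy, hyx, by rw [← hcard]; exact hk'⟩
end

section
/- Let d ≥ 1. There exists α₀ > d, depending only on d, such that for every α ≥ α₀ the infimum over all pairs (φ,ψ) ∈ B_α of the Lebesgue measure of ⋃_{x∈φ} B_{D(x,ψ)}(x) equals κ_d, the volume of the unit ball in ℝ^d; moreover, this value is attained by the pair φ = {0}, ψ = {0, (1,0,…,0)}. -/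
/-!
If some `D(x, ψ) ≥ 1` the ball around `x` alone has volume `≥ κ_d`. Otherwise let `c ∈ φ` have
the largest radius `M = D(c, ψ) < 1`. The ball `B_M(c)` and, for the other `x ∈ φ`, the half of
`B_{D(x,ψ)/2}(x)` facing away from `c` are pairwise disjoint, so the union has volume at least
`κ_d (M^d + 2^{-(d+1)} ∑_{x ≠ c} D(x,ψ)^d)`. Since `D(x,ψ) ≤ M`,
`1 ≤ ∑ D(x,ψ)^α ≤ M^α + M^{α-d} ∑_{x ≠ c} D(x,ψ)^d`, and weighted AM-GM with weights `1 - ε`,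
`ε = 2^{-(d+1)}` turns this into `1 ≤ M^d + ε ∑_{x ≠ c} D(x,ψ)^d` as soon as `ε α ≥ d`.
The pair `φ = {0}`, `ψ = {0, e₁}` attains `κ_d`.
-/

open Metric Set MeasureTheory ENNReal
open scoped Classical

noncomputable def nnDist (d : ℕ) (ψ : Finset (EuclideanSpace ℝ (Fin d)))
    (x : EuclideanSpace ℝ (Fin d)) : ℝ :=
  Metric.infDist x ((↑ψ : Set (EuclideanSpace ℝ (Fin d))) \ {x})

def Generic (d : ℕ) (ψ : Finset (EuclideanSpace ℝ (Fin d))) : Prop :=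
  ∀ w ∈ ψ, ∀ x ∈ ψ, ∀ y ∈ ψ, ∀ z ∈ ψ,
    dist w x = dist y z → 0 < dist w x → ({w, x} : Set (EuclideanSpace ℝ (Fin d))) = {y, z}

noncomputable def memB (d : ℕ) (α : ℝ) (φ ψ : Finset (EuclideanSpace ℝ (Fin d))) : Prop :=
  φ ⊆ ψ ∧ 2 ≤ ψ.card ∧ Generic d ψ ∧ 1 ≤ ∑ x ∈ φ, nnDist d ψ x ^ α

open scoped RealInnerProductSpace

theorem one_le_rpow_add_mul_of_one_le_rpow_add_rpow_mul {d α ε M S : ℝ}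
    (hε0 : 0 < ε) (hε1 : ε ≤ 1) (hdα : d ≤ ε * α) (hM0 : 0 < M) (hM1 : M ≤ 1)
    (hS : 1 ≤ M ^ α + M ^ (α - d) * S) :
    1 ≤ M ^ d + ε * S := by
  have hSge : M ^ (d - α) - M ^ d ≤ S := by
    have h := mul_le_mul_of_nonneg_left (sub_le_iff_le_add.2 hS)
      (Real.rpow_nonneg hM0.le (d - α))
    rw [mul_sub, mul_one, ← mul_assoc, ← Real.rpow_add hM0, ← Real.rpow_add hM0,
      sub_add_cancel, sub_add_sub_cancel, sub_self, Real.rpow_zero, one_mul] at h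
    linarith
  -- weighted AM-GM between `M ^ d` and `M ^ (d - α)` with weights `1 - ε` and `ε`
  have amgm := Real.geom_mean_le_arith_mean2_weighted (sub_nonneg.2 hε1) hε0.le
    (Real.rpow_nonneg hM0.le d) (Real.rpow_nonneg hM0.le (d - α)) (sub_add_cancel 1 ε)
  rw [← Real.rpow_mul hM0.le, ← Real.rpow_mul hM0.le, ← Real.rpow_add hM0] at amgm
  have hone : 1 ≤ M ^ (d * (1 - ε) + (d - α) * ε) :=
    Real.one_le_rpow_of_pos_of_le_one_of_nonpos hM0 hM1 (by nlinarith)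
  have := mul_le_mul_of_nonneg_left hSge hε0.le
  linarith

theorem one_le_rpow_add_mul_sum_erase {ι : Type*} {s : Finset ι} {r : ι → ℝ} {c : ι}
    (hc : c ∈ s) (hr : ∀ i ∈ s, 0 < r i) (hmax : ∀ i ∈ s, r i ≤ r c) (hc1 : r c ≤ 1)
    {d α ε : ℝ} (hd : 0 ≤ d) (hε0 : 0 < ε) (hε1 : ε ≤ 1) (hdα : d ≤ ε * α)
    (hsum : 1 ≤ ∑ i ∈ s, r i ^ α) :
    1 ≤ r c ^ d + ε * ∑ i ∈ s.erase c, r i ^ d := by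
  have hαd : 0 ≤ α - d := by nlinarith
  refine one_le_rpow_add_mul_of_one_le_rpow_add_rpow_mul hε0 hε1 hdα (hr c hc) hc1 ?_
  calc 1 ≤ ∑ i ∈ s, r i ^ α := hsum
    _ = r c ^ α + ∑ i ∈ s.erase c, r i ^ (α - d) * r i ^ d := by
      rw [← Finset.add_sum_erase s _ hc]
      congr 1
      refine Finset.sum_congr rfl fun i hi => ?_
      rw [← Real.rpow_add (hr i (Finset.mem_of_mem_erase hi)), sub_add_cancel]
    _ ≤ r c ^ α + r c ^ (α - d) * ∑ i ∈ s.erase c, r i ^ d := by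
      rw [Finset.mul_sum]
      gcongr with i hi
      · exact Real.rpow_nonneg (hr i (Finset.mem_of_mem_erase hi)).le d
      · exact (hr i (Finset.mem_of_mem_erase hi)).le
      · exact hmax i (Finset.mem_of_mem_erase hi)

section HalfBall

variable {E : Type*} [NormedAddCommGroup E] [InnerProductSpace ℝ E]

def halfBallAway (c x : E) (r : ℝ) : Set E :=
  ball x r ∩ {z | ⟪z - x, c - x⟫ ≤ 0}

theorem halfBallAway_subset_ball (c x : E) (r : ℝ) : halfBallAway c x r ⊆ ball x r :=
  inter_subset_left

theorem measurableSet_halfBallAway [MeasurableSpace E] [OpensMeasurableSpace E]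
    (c x : E) (r : ℝ) : MeasurableSet (halfBallAway c x r) :=
  measurableSet_ball.inter (isClosed_le (by fun_prop) continuous_const).measurableSet

theorem dist_le_dist_of_mem_halfBallAway {c x z : E} {r : ℝ} (hz : z ∈ halfBallAway c x r) :
    dist c x ≤ dist z c := by
  have hinner : ⟪z - x, c - x⟫ ≤ 0 := hz.2
  have hsq : ‖c - x‖ ^ 2 ≤ ‖z - c‖ ^ 2 := by
    have e := norm_sub_sq_real (z - x) (c - x)
    rw [sub_sub_sub_cancel_right] at e
    nlinarith [sq_nonneg ‖z - x‖]
  rw [dist_eq_norm, dist_eq_norm]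
  exact (sq_le_sq₀ (norm_nonneg _) (norm_nonneg _)).1 hsq

theorem disjoint_ball_halfBallAway {c x : E} {R r : ℝ} (h : R ≤ dist c x) :
    Disjoint (ball c R) (halfBallAway c x r) :=
  Set.disjoint_left.2 fun _ hz hzx =>
    (mem_ball.1 hz).not_ge (h.trans (dist_le_dist_of_mem_halfBallAway hzx))

theorem measure_ball_le_two_mul_measure_halfBallAway [FiniteDimensional ℝ E] [MeasurableSpace E]
    [BorelSpace E] (μ : Measure E) [μ.IsAddHaarMeasure] (c x : E) (r : ℝ) :
    μ (ball x r) ≤ 2 * μ (halfBallAway c x r) := by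
  set σ := AffineMap.homothety x (-1 : ℝ)
  -- the point reflection `σ` through `x` maps the other half of the ball onto this one
  have hcover : ball x r ⊆ halfBallAway c x r ∪ σ '' halfBallAway c x r := by
    intro z hz
    rcases le_total ⟪z - x, c - x⟫ 0 with h | h
    · exact Or.inl ⟨hz, h⟩
    · refine Or.inr ⟨σ z, ⟨?_, ?_⟩, ?_⟩
      · simpa [σ, AffineMap.homothety_apply, mem_ball, dist_eq_norm, norm_sub_rev x z] using hz
      · show ⟪σ z - x, c - x⟫ ≤ 0
        simp only [σ, AffineMap.homothety_apply, vsub_eq_sub, vadd_eq_add, add_sub_cancel_right,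
          neg_one_smul, inner_neg_left]
        linarith
      · simp [σ, AffineMap.homothety_apply]
  calc μ (ball x r) ≤ μ (halfBallAway c x r) + μ (σ '' halfBallAway c x r) :=
        (measure_mono hcover).trans (measure_union_le _ _)
    _ = 2 * μ (halfBallAway c x r) := by
        rw [Measure.addHaar_image_homothety, two_mul]; simp

end HalfBall

section Packing

variable {E : Type*} [NormedAddCommGroup E] [InnerProductSpace ℝ E] [FiniteDimensional ℝ E]
  [MeasurableSpace E] [BorelSpace E] (μ : Measure E) [μ.IsAddHaarMeasure]

/-- The left-hand side is the measure of the disjoint union of `ball c (r c)` and the sets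
`halfBallAway c x (r x / 2)`, `x ≠ c`. -/
theorem measure_ball_add_sum_le_measure_biUnion_closedBall {φ : Finset E} {r : E → ℝ}
    (hsep : ∀ x ∈ φ, ∀ y ∈ φ, x ≠ y → r x ≤ dist x y) {c : E} (hc : c ∈ φ) :
    μ (ball c (r c)) + ∑ x ∈ φ.erase c, μ (ball x (r x / 2)) / 2 ≤
      μ (⋃ x ∈ φ, closedBall x (r x)) := by
  set H : E → Set E := fun x => halfBallAway c x (r x / 2)
  have hH : ∀ x, MeasurableSet (H x) := fun x => measurableSet_halfBallAway c x _
  have hHdisj : (↑(φ.erase c) : Set E).PairwiseDisjoint H := by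
    intro x hx y hy hxy
    have hx' := hsep x (Finset.mem_of_mem_erase hx) y (Finset.mem_of_mem_erase hy) hxy
    have hy' := hsep y (Finset.mem_of_mem_erase hy) x (Finset.mem_of_mem_erase hx) hxy.symm
    rw [dist_comm] at hy'
    exact (ball_disjoint_ball (by linarith)).mono (halfBallAway_subset_ball _ _ _)
      (halfBallAway_subset_ball _ _ _)
  have hdisj : Disjoint (ball c (r c)) (⋃ x ∈ φ.erase c, H x) :=
    Set.disjoint_iUnion₂_right.2 fun x hx => disjoint_ball_halfBallAway
      (hsep c hc x (Finset.mem_of_mem_erase hx) (Finset.ne_of_mem_erase hx).symm)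
  have hmem : ∀ x ∈ φ, closedBall x (r x) ⊆ ⋃ x ∈ φ, closedBall x (r x) :=
    fun x hx => Finset.subset_set_biUnion_of_mem (f := fun x => closedBall x (r x)) hx
  have hsub : ball c (r c) ∪ ⋃ x ∈ φ.erase c, H x ⊆ ⋃ x ∈ φ, closedBall x (r x) := by
    refine union_subset (ball_subset_closedBall.trans (hmem c hc)) (iUnion₂_subset fun x hx =>
      Subset.trans (fun z hz => ?_) (hmem x (Finset.mem_of_mem_erase hx)))
    have := mem_ball.1 hz.1
    exact mem_closedBall.2 (by linarith [dist_nonneg (x := z) (y := x)])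
  calc μ (ball c (r c)) + ∑ x ∈ φ.erase c, μ (ball x (r x / 2)) / 2
      ≤ μ (ball c (r c)) + ∑ x ∈ φ.erase c, μ (H x) := by
        gcongr with x
        exact ENNReal.div_le_of_le_mul
          ((measure_ball_le_two_mul_measure_halfBallAway μ c x _).trans_eq (mul_comm _ _))
    _ = μ (ball c (r c) ∪ ⋃ x ∈ φ.erase c, H x) := by
        rw [measure_union hdisj (Finset.measurableSet_biUnion _ fun x _ => hH x),
          measure_biUnion_finset hHdisj fun x _ => hH x]
    _ ≤ μ (⋃ x ∈ φ, closedBall x (r x)) := measure_mono hsub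

theorem measure_ball_half_div_two {x : E} {r : ℝ} (hr : 0 < r) :
    μ (ball x (r / 2)) / 2 =
      ENNReal.ofReal (r ^ Module.finrank ℝ E / 2 ^ (Module.finrank ℝ E + 1)) * μ (ball 0 1) := by
  rw [Measure.addHaar_ball_of_pos μ x (half_pos hr), ENNReal.mul_div_right_comm,
    ← ENNReal.ofReal_ofNat 2, ← ENNReal.ofReal_div_of_pos two_pos, div_pow, div_div, ← pow_succ]

theorem measure_ball_le_measure_biUnion_closedBall {φ : Finset E} {r : E → ℝ}
    (hr : ∀ x ∈ φ, 0 < r x) (hsep : ∀ x ∈ φ, ∀ y ∈ φ, x ≠ y → r x ≤ dist x y) {α : ℝ}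
    (hα : Module.finrank ℝ E * 2 ^ (Module.finrank ℝ E + 1) ≤ α)
    (hsum : 1 ≤ ∑ x ∈ φ, r x ^ α) :
    μ (ball 0 1) ≤ μ (⋃ x ∈ φ, closedBall x (r x)) := by
  set n := Module.finrank ℝ E
  by_cases hbig : ∃ x ∈ φ, 1 ≤ r x
  · obtain ⟨x, hx, h1⟩ := hbig
    calc μ (ball 0 1) = μ (ball x 1) := (Measure.addHaar_ball_center μ x 1).symm
      _ ≤ μ (closedBall x (r x)) :=
        measure_mono (ball_subset_closedBall.trans (closedBall_subset_closedBall h1))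
      _ ≤ μ (⋃ x ∈ φ, closedBall x (r x)) :=
        measure_mono (Finset.subset_set_biUnion_of_mem (f := fun x => closedBall x (r x)) hx)
  push Not at hbig
  have hφ : φ.Nonempty := Finset.nonempty_of_sum_ne_zero (by linarith : ∑ x ∈ φ, r x ^ α ≠ 0)
  obtain ⟨c, hc, hmax⟩ := φ.exists_max_image r hφ
  have hreal : 1 ≤ r c ^ n + ∑ x ∈ φ.erase c, r x ^ n / 2 ^ (n + 1) := by
    have h := one_le_rpow_add_mul_sum_erase hc hr hmax (hbig c hc).le (Nat.cast_nonneg n)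
      (inv_pos.2 (by positivity : (0 : ℝ) < 2 ^ (n + 1)))
      (inv_le_one_of_one_le₀ (one_le_pow₀ one_le_two))
      ((le_inv_mul_iff₀ (by positivity)).2 (by rwa [mul_comm])) hsum
    simpa only [Real.rpow_natCast, Finset.mul_sum, inv_mul_eq_div] using h
  have hterms : ∀ x ∈ φ.erase c, 0 ≤ r x ^ n / 2 ^ (n + 1) :=
    fun x hx => (div_pos (pow_pos (hr x (Finset.mem_of_mem_erase hx)) n) (by positivity)).le
  calc μ (ball 0 1) = 1 * μ (ball 0 1) := (one_mul _).symm
    _ ≤ ENNReal.ofReal (r c ^ n + ∑ x ∈ φ.erase c, r x ^ n / 2 ^ (n + 1)) * μ (ball 0 1) := by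
      gcongr
      exact ENNReal.one_le_ofReal.2 hreal
    _ = μ (ball c (r c)) + ∑ x ∈ φ.erase c, μ (ball x (r x / 2)) / 2 := by
      rw [ENNReal.ofReal_add (pow_nonneg (hr c hc).le n) (Finset.sum_nonneg hterms),
        ENNReal.ofReal_sum_of_nonneg hterms, add_mul, Finset.sum_mul,
        Measure.addHaar_ball_of_pos μ c (hr c hc)]
      congr 1
      exact Finset.sum_congr rfl fun x hx =>
        (measure_ball_half_div_two μ (hr x (Finset.mem_of_mem_erase hx))).symm
    _ ≤ μ (⋃ x ∈ φ, closedBall x (r x)) :=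
      measure_ball_add_sum_le_measure_biUnion_closedBall μ hsep hc

end Packing

section NearestNeighbor

variable {d : ℕ} {ψ : Finset (EuclideanSpace ℝ (Fin d))}

theorem nnDist_pos (hψ : 2 ≤ ψ.card) (x : EuclideanSpace ℝ (Fin d)) : 0 < nnDist d ψ x := by
  obtain ⟨y, hy, hyx⟩ := Finset.exists_mem_ne (by omega : 1 < ψ.card) x
  exact ((ψ.finite_toSet.subset sdiff_subset).isClosed.notMem_iff_infDist_pos
    ⟨y, hy, hyx⟩).1 fun h => h.2 rfl

theorem nnDist_le_dist {x y : EuclideanSpace ℝ (Fin d)} (hy : y ∈ ψ) (hyx : y ≠ x) :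
    nnDist d ψ x ≤ dist x y :=
  infDist_le_dist_of_mem ⟨hy, hyx⟩

theorem nnDist_pair_left {x y : EuclideanSpace ℝ (Fin d)} (hxy : x ≠ y) :
    nnDist d {x, y} x = dist x y := by
  rw [nnDist, Finset.coe_pair, Set.pair_sdiff_left hxy, infDist_singleton]

theorem generic_pair (x y : EuclideanSpace ℝ (Fin d)) : Generic d {x, y} := by
  have hpair : ∀ a ∈ ({x, y} : Finset _), ∀ b ∈ ({x, y} : Finset _), a ≠ b →
      ({a, b} : Set (EuclideanSpace ℝ (Fin d))) = {x, y} := by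
    simp only [Finset.mem_insert, Finset.mem_singleton]
    rintro a (rfl | rfl) b (rfl | rfl) hab <;>
      first | exact absurd rfl hab | rfl | exact Set.pair_comm _ _
  intro w hw z hz u hu v hv hdist hpos
  rw [hpair w hw z hz (dist_pos.1 hpos), hpair u hu v hv (dist_pos.1 (hdist ▸ hpos))]

theorem memB_singleton_pair {x y : EuclideanSpace ℝ (Fin d)} (hxy : dist x y = 1) (α : ℝ) :
    memB d α {x} {x, y} := by
  have hne : x ≠ y := dist_pos.1 (hxy ▸ one_pos)
  refine ⟨by simp, (Finset.card_pair hne).ge, generic_pair x y, ?_⟩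
  rw [Finset.sum_singleton, nnDist_pair_left hne, hxy, Real.one_rpow]

theorem volume_ball_le_of_memB {α : ℝ} (hα : d * 2 ^ (d + 1) ≤ α)
    {φ : Finset (EuclideanSpace ℝ (Fin d))} (h : memB d α φ ψ) :
    volume (ball (0 : EuclideanSpace ℝ (Fin d)) 1) ≤
      volume (⋃ x ∈ φ, closedBall x (nnDist d ψ x)) := by
  obtain ⟨hφψ, hψ, -, hsum⟩ := h
  exact measure_ball_le_measure_biUnion_closedBall volume (fun x _ => nnDist_pos hψ x)
    (fun x _ y hy hxy => nnDist_le_dist (hφψ hy) hxy.symm)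
    (by rwa [finrank_euclideanSpace_fin]) hsum

end NearestNeighbor

theorem stmt12 (d : ℕ) (hd : 0 < d) :
    ∃ α₀ : ℝ, (d : ℝ) < α₀ ∧ ∀ α : ℝ, α₀ ≤ α →
      (sInf {v : ℝ≥0∞ | ∃ φ ψ : Finset (EuclideanSpace ℝ (Fin d)), memB d α φ ψ ∧
          v = volume (⋃ x ∈ φ, closedBall x (nnDist d ψ x))} =
        volume (closedBall (0 : EuclideanSpace ℝ (Fin d)) 1)) ∧
      memB d α {0} {0, EuclideanSpace.single (⟨0, hd⟩ : Fin d) (1 : ℝ)} ∧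
      volume (⋃ x ∈ ({0} : Finset (EuclideanSpace ℝ (Fin d))),
          closedBall x (nnDist d ({0, EuclideanSpace.single (⟨0, hd⟩ : Fin d) (1 : ℝ)}) x)) =
        volume (closedBall (0 : EuclideanSpace ℝ (Fin d)) 1) := by
  refine ⟨d * 2 ^ (d + 1), lt_mul_of_one_lt_right (by exact_mod_cast hd)
    (one_lt_pow₀ (one_lt_two : (1 : ℝ) < 2) (Nat.succ_ne_zero d)), fun α hα => ?_⟩
  set e := EuclideanSpace.single (⟨0, hd⟩ : Fin d) (1 : ℝ)
  have he : dist 0 e = 1 := by rw [dist_zero_left, PiLp.norm_single, norm_one]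
  have hne : (0 : EuclideanSpace ℝ (Fin d)) ≠ e := dist_pos.1 (he ▸ one_pos)
  have : Nontrivial (EuclideanSpace ℝ (Fin d)) := nontrivial_of_ne 0 e hne
  have hwit := memB_singleton_pair he α
  have hvol : volume (⋃ x ∈ ({0} : Finset (EuclideanSpace ℝ (Fin d))),
      closedBall x (nnDist d {0, e} x)) = volume (closedBall (0 : EuclideanSpace ℝ (Fin d)) 1) := by
    rw [Finset.set_biUnion_singleton, nnDist_pair_left hne, he]
  refine ⟨le_antisymm (sInf_le ⟨_, _, hwit, hvol.symm⟩) (le_sInf ?_), hwit, hvol⟩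
  rintro v ⟨φ, ψ, hm, rfl⟩
  rw [Measure.addHaar_closedBall_eq_addHaar_ball]
  exact volume_ball_le_of_memB hα hm
end

section
/- Let d ≥ 1, let x, y ∈ ℝ^d, and let r, s > 0 with dist(x,y) ≥ r. Then the Lebesgue measure of B_s(y) \ B_r(x) is at least half the Lebesgue measure of B_s(y). -/
open Metric Set MeasureTheory

open scoped RealInnerProductSpace

/-!
Let `v = x - y`. Every point `z` of the open half-space `⟪z - y, v⟫ < 0` is farther from `x`
than `y` is, hence lies outside `B_r(x)`. The point reflection about `y` preserves Lebesgue measure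
and `B_s(y)`, and swaps this half-space with the opposite one; the hyperplane between them is
null, so this half of `B_s(y)` carries at least half its measure.
-/

theorem dist_lt_dist_of_inner_sub_neg {E : Type*} [NormedAddCommGroup E] [InnerProductSpace ℝ E]
    {x y z : E} (h : ⟪z - y, x - y⟫ < 0) : dist x y < dist z x := by
  have hz : z - x = (z - y) - (x - y) := by abel
  have hsq : dist x y ^ 2 < dist z x ^ 2 := by
    rw [dist_eq_norm x y, dist_eq_norm z x, hz, norm_sub_sq_real (z - y) (x - y)]
    nlinarith [sq_nonneg ‖z - y‖]
  exact lt_of_pow_lt_pow_left₀ 2 dist_nonneg hsq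

theorem MeasureTheory.Measure.measurePreserving_pointReflection {G : Type*} [AddCommGroup G]
    [MeasurableSpace G] [MeasurableAdd G] [MeasurableNeg G] (μ : Measure G)
    [μ.IsAddLeftInvariant] [μ.IsNegInvariant] (y : G) :
    MeasurePreserving (Equiv.pointReflection y) μ μ := by
  convert (measurePreserving_add_left μ (y + y)).comp (Measure.measurePreserving_neg μ) using 1
  ext z
  simp only [Equiv.pointReflection_apply, vsub_eq_sub, vadd_eq_add, Function.comp_apply]
  abel

theorem Equiv.pointReflection_preimage_closedBall {E : Type*} [SeminormedAddCommGroup E]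
    (y : E) (s : ℝ) :
    Equiv.pointReflection y ⁻¹' closedBall y s = closedBall y s := by
  ext z
  simp [Equiv.pointReflection_apply, dist_eq_norm, norm_sub_rev]

section Halfspace

variable {E : Type*} [NormedAddCommGroup E] [InnerProductSpace ℝ E] [FiniteDimensional ℝ E]
  [MeasurableSpace E] [BorelSpace E] (μ : Measure E) [μ.IsAddHaarMeasure]

theorem MeasureTheory.Measure.addHaar_hyperplane (y : E) {v : E} (hv : v ≠ 0) :
    μ {z | ⟪z - y, v⟫ = 0} = 0 := by
  have hH : {z | ⟪z - y, v⟫ = 0} = AffineSubspace.mk' y (LinearMap.ker (innerₛₗ ℝ v)) := by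
    ext z
    simp [real_inner_comm]
  rw [hH]
  refine Measure.addHaar_affineSubspace μ _ fun htop => hv ?_
  have hdir := congrArg AffineSubspace.direction htop
  rw [AffineSubspace.direction_mk', AffineSubspace.direction_top] at hdir
  have hvker : v ∈ LinearMap.ker (innerₛₗ ℝ v) := hdir ▸ Submodule.mem_top
  simpa using hvker

theorem MeasureTheory.Measure.addHaar_le_two_mul_inter_halfspace {S : Set E} (y : E)
    (hS : Equiv.pointReflection y ⁻¹' S = S) {v : E} (hv : v ≠ 0) :
    μ S ≤ 2 * μ (S ∩ {z | ⟪z - y, v⟫ < 0}) := by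
  set N := S ∩ {z | ⟪z - y, v⟫ < 0}
  set P := S ∩ {z | 0 < ⟪z - y, v⟫}
  have hPN : P = Equiv.pointReflection y ⁻¹' N := by
    ext z
    have hz : (y - z + y) - y = -(z - y) := by abel
    have hzS : y - z + y ∈ S ↔ z ∈ S := Set.ext_iff.mp hS z
    simp only [N, P, mem_inter_iff, mem_preimage, mem_ofPred_eq, Equiv.pointReflection_apply,
      vsub_eq_sub, vadd_eq_add, hzS, hz, inner_neg_left, Left.neg_neg_iff]
  have hNP : μ P = μ N := by
    rw [hPN]
    exact (Measure.measurePreserving_pointReflection μ y).measure_preimage_emb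
      (Homeomorph.pointReflection y).measurableEmbedding N
  have hcover : S ⊆ (N ∪ P) ∪ {z | ⟪z - y, v⟫ = 0} := by
    intro z hz
    rcases lt_trichotomy ⟪z - y, v⟫ 0 with hlt | heq | hgt
    · exact .inl (.inl ⟨hz, hlt⟩)
    · exact .inr heq
    · exact .inl (.inr ⟨hz, hgt⟩)
  calc μ S ≤ μ ((N ∪ P) ∪ {z | ⟪z - y, v⟫ = 0}) := measure_mono hcover
    _ ≤ μ (N ∪ P) + 0 := by
        rw [← Measure.addHaar_hyperplane μ y hv]; exact measure_union_le _ _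
    _ ≤ μ N + μ P := by rw [add_zero]; exact measure_union_le _ _
    _ = 2 * μ N := by rw [hNP, two_mul]

end Halfspace

theorem stmt14_general (d : ℕ) (x y : EuclideanSpace ℝ (Fin d)) (r s : ℝ)
    (hr : 0 < r) (h : r ≤ dist x y) :
    volume (closedBall y s) / 2 ≤ volume (closedBall y s \ closedBall x r) := by
  have hxy : x - y ≠ 0 := sub_ne_zero.mpr (dist_pos.mp (hr.trans_le h))
  have hhalf : closedBall y s ∩ {z | ⟪z - y, x - y⟫ < 0} ⊆ closedBall y s \ closedBall x r :=
    fun z ⟨hzB, hz⟩ => ⟨hzB, fun hzx => (h.trans_lt (dist_lt_dist_of_inner_sub_neg hz)).not_ge hzx⟩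
  rw [ENNReal.div_le_iff_le_mul (.inl two_ne_zero) (.inl ENNReal.ofNat_ne_top), mul_comm]
  calc volume (closedBall y s)
      ≤ 2 * volume (closedBall y s ∩ {z | ⟪z - y, x - y⟫ < 0}) :=
        Measure.addHaar_le_two_mul_inter_halfspace volume y
          (Equiv.pointReflection_preimage_closedBall y s) hxy
    _ ≤ 2 * volume (closedBall y s \ closedBall x r) := by gcongr

theorem stmt14 (d : ℕ) (hd : 1 ≤ d) (x y : EuclideanSpace ℝ (Fin d)) (r s : ℝ)
    (hr : 0 < r) (hs : 0 < s) (h : r ≤ dist x y) :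
    volume (closedBall y s) / 2 ≤ volume (closedBall y s \ closedBall x r) :=
  stmt14_general d x y r s hr h
end
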